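/- arXiv:2501.12058 — 4 statements merged into one kernel-verified Lean document; each statement's English description precedes it below -/
import Mathlib

section
/- Let (X_1, Y_1), …, (X_n, Y_n) (n ≥ 2) be jointly distributed random variables on finite alphabets (a single joint probability mass function on ∏_i 𝒳_i × ∏_i 𝒴_i), and let γ be a fractional partition with respect to a family 𝓕 of subsets of [n] satisfying the standing assumptions. Then (𝓕, γ)-MI(Y_1; …; Y_n) ≤ (𝓕, γ)-MI(X_1; …; X_n) + ∑_{i=1}^n H(Y_i | X_i), where H(Y_i | X_i) = H(X_i, Y_i) − H(X_i). -/
open Finset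
open scoped Classical BigOperators

lemma negMulLog_add_le {a b : ℝ} (ha : 0 ≤ a) (hb : 0 ≤ b) :
    Real.negMulLog (a + b) ≤ Real.negMulLog a + Real.negMulLog b := by
  have h1 : a * Real.log a ≤ a * Real.log (a + b) := by
    rcases eq_or_lt_of_le ha with h | h
    · simp [← h]
    · exact mul_le_mul_of_nonneg_left (Real.log_le_log h (by linarith)) ha
  have h2 : b * Real.log b ≤ b * Real.log (a + b) := by
    rcases eq_or_lt_of_le hb with h | h
    · simp [← h]
    · exact mul_le_mul_of_nonneg_left (Real.log_le_log h (by linarith)) hb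
  have h3 : -(a + b) * Real.log (a + b)
      = -(a * Real.log (a + b)) - b * Real.log (a + b) := by ring
  simp only [Real.negMulLog]
  rw [h3]
  linarith

lemma negMulLog_sum_le {ι : Type*} (s : Finset ι) (f : ι → ℝ) (hf : ∀ i ∈ s, 0 ≤ f i) :
    Real.negMulLog (∑ i ∈ s, f i) ≤ ∑ i ∈ s, Real.negMulLog (f i) := by
  induction s using Finset.cons_induction with
  | empty => simp
  | cons a s ha ih =>
    rw [Finset.sum_cons, Finset.sum_cons]
    have h1 := negMulLog_add_le (hf a (Finset.mem_cons_self a s))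
      (Finset.sum_nonneg fun i hi => hf i (Finset.mem_cons_of_mem hi))
    have h2 := ih (fun i hi => hf i (Finset.mem_cons_of_mem hi))
    linarith



/-- Entropy of the pushforward of `p` along the observation map `obs`
    (`H = ∑ negMulLog`, with `0 log 0 = 0`). -/
noncomputable def entOf {Ω V : Type} [Fintype Ω] [Fintype V]
    (p : Ω → ℝ) (obs : Ω → V) : ℝ :=
  ∑ v : V, Real.negMulLog (∑ ω ∈ Finset.univ.filter (fun ω => obs ω = v), p ω)

lemma entOf_comp_le {Ω A B : Type} [Fintype Ω] [Fintype A] [Fintype B]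
    (p : Ω → ℝ) (hp0 : ∀ ω, 0 ≤ p ω) (g : Ω → B) (φ : B → A) :
    entOf p (fun ω => φ (g ω)) ≤ entOf p g := by
  unfold entOf
  have key : ∀ a : A, (∑ ω ∈ Finset.univ.filter (fun ω => φ (g ω) = a), p ω)
      = ∑ b ∈ Finset.univ.filter (fun b => φ b = a),
          ∑ ω ∈ Finset.univ.filter (fun ω => g ω = b), p ω := by
    intro a
    have h2 : Finset.univ.filter (fun ω => φ (g ω) = a)
        = Finset.univ.filter (fun ω => g ω ∈ Finset.univ.filter (fun b => φ b = a)) := by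
      ext ω; simp
    rw [h2, ← Finset.sum_fiberwise_eq_sum_filter]
  calc ∑ a : A, Real.negMulLog (∑ ω ∈ Finset.univ.filter (fun ω => φ (g ω) = a), p ω)
      = ∑ a : A, Real.negMulLog (∑ b ∈ Finset.univ.filter (fun b => φ b = a),
          ∑ ω ∈ Finset.univ.filter (fun ω => g ω = b), p ω) := by
        exact Finset.sum_congr rfl fun a _ => by rw [key a]
    _ ≤ ∑ a : A, ∑ b ∈ Finset.univ.filter (fun b => φ b = a),
          Real.negMulLog (∑ ω ∈ Finset.univ.filter (fun ω => g ω = b), p ω) := by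
        refine Finset.sum_le_sum fun a _ => negMulLog_sum_le _ _ fun b _ =>
          Finset.sum_nonneg fun ω _ => hp0 ω
    _ = ∑ b : B, Real.negMulLog (∑ ω ∈ Finset.univ.filter (fun ω => g ω = b), p ω) :=
        Finset.sum_fiberwise _ _ _

lemma entOf_le_det {Ω A B : Type} [Fintype Ω] [Nonempty Ω] [Fintype A] [Fintype B]
    (p : Ω → ℝ) (hp0 : ∀ ω, 0 ≤ p ω) (f : Ω → A) (g : Ω → B)
    (hdet : ∀ ω ω', g ω = g ω' → f ω = f ω') :
    entOf p f ≤ entOf p g := by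
  have hA : Nonempty A := ⟨f (Classical.arbitrary Ω)⟩
  set φ : B → A := fun b => if h : ∃ ω, g ω = b then f h.choose else Classical.arbitrary A with hφ
  have hfg : f = fun ω => φ (g ω) := by
    funext ω
    have h : ∃ ω', g ω' = g ω := ⟨ω, rfl⟩
    simp only [hφ, dif_pos h]
    exact (hdet _ _ h.choose_spec).symm
  rw [hfg]
  exact entOf_comp_le p hp0 g φ

lemma entOf_congr {Ω A B : Type} [Fintype Ω] [Nonempty Ω] [Fintype A] [Fintype B]
    (p : Ω → ℝ) (hp0 : ∀ ω, 0 ≤ p ω) (f : Ω → A) (g : Ω → B)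
    (h : ∀ ω ω', f ω = f ω' ↔ g ω = g ω') :
    entOf p f = entOf p g :=
  le_antisymm (entOf_le_det p hp0 f g fun ω ω' e => (h ω ω').2 e)
    (entOf_le_det p hp0 g f fun ω ω' e => (h ω ω').1 e)



lemma mi_nonneg {B C : Type} [Fintype B] [Fintype C]
    (w : B → C → ℝ) (hw : ∀ b c, 0 ≤ w b c) :
    (∑ b, ∑ c, Real.negMulLog (w b c)) + Real.negMulLog (∑ b, ∑ c, w b c) ≤
    (∑ b, Real.negMulLog (∑ c, w b c)) + ∑ c, Real.negMulLog (∑ b, w b c) := by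
  have hwb0 : ∀ b, 0 ≤ ∑ c, w b c := fun b => Finset.sum_nonneg fun c _ => hw b c
  have hwc0 : ∀ c, 0 ≤ ∑ b, w b c := fun c => Finset.sum_nonneg fun b _ => hw b c
  have hT0 : 0 ≤ ∑ b, ∑ c, w b c := Finset.sum_nonneg fun b _ => hwb0 b
  have key : ∀ b c, w b c *
      (Real.log (∑ c', w b c') + Real.log (∑ b', w b' c)
        - Real.log (w b c) - Real.log (∑ b', ∑ c', w b' c'))
      ≤ (∑ c', w b c') * (∑ b', w b' c) / (∑ b', ∑ c', w b' c') - w b c := by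
    intro b c
    rcases eq_or_lt_of_le (hw b c) with hz | hpos
    · rw [← hz]
      have : (0:ℝ) ≤ (∑ c', w b c') * (∑ b', w b' c) / (∑ b', ∑ c', w b' c') :=
        div_nonneg (mul_nonneg (hwb0 b) (hwc0 c)) hT0
      simpa using this
    · have hwbp : 0 < ∑ c', w b c' := lt_of_lt_of_le hpos
        (Finset.single_le_sum (fun c' _ => hw b c') (mem_univ c))
      have hwcp : 0 < ∑ b', w b' c := lt_of_lt_of_le hpos
        (Finset.single_le_sum (fun b' _ => hw b' c) (mem_univ b))
      have hTpos : 0 < ∑ b', ∑ c', w b' c' := lt_of_lt_of_le hwbp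
        (Finset.single_le_sum (fun b' _ => hwb0 b') (mem_univ b))
      have hr : 0 < (∑ c', w b c') * (∑ b', w b' c) / (w b c * (∑ b', ∑ c', w b' c')) := by
        positivity
      have hlog : Real.log ((∑ c', w b c') * (∑ b', w b' c) / (w b c * (∑ b', ∑ c', w b' c')))
          = Real.log (∑ c', w b c') + Real.log (∑ b', w b' c)
            - Real.log (w b c) - Real.log (∑ b', ∑ c', w b' c') := by
        rw [Real.log_div (by positivity) (by positivity),
            Real.log_mul (ne_of_gt hwbp) (ne_of_gt hwcp),
            Real.log_mul (ne_of_gt hpos) (ne_of_gt hTpos)]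
        ring
      have hle := Real.log_le_sub_one_of_pos hr
      rw [hlog] at hle
      have h2 := mul_le_mul_of_nonneg_left hle (hw b c)
      calc w b c * (Real.log (∑ c', w b c') + Real.log (∑ b', w b' c)
              - Real.log (w b c) - Real.log (∑ b', ∑ c', w b' c'))
          ≤ w b c * ((∑ c', w b c') * (∑ b', w b' c)
              / (w b c * (∑ b', ∑ c', w b' c')) - 1) := h2
        _ = (∑ c', w b c') * (∑ b', w b' c) / (∑ b', ∑ c', w b' c') - w b c := by
            field_simp
  have expand : (∑ b, ∑ c, Real.negMulLog (w b c)) + Real.negMulLog (∑ b, ∑ c, w b c)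
      - ((∑ b, Real.negMulLog (∑ c, w b c)) + ∑ c, Real.negMulLog (∑ b, w b c))
      = ∑ b, ∑ c, w b c *
          (Real.log (∑ c', w b c') + Real.log (∑ b', w b' c)
            - Real.log (w b c) - Real.log (∑ b', ∑ c', w b' c')) := by
    have e1 : (∑ b, Real.negMulLog (∑ c, w b c))
        = ∑ b, ∑ c, w b c * (- Real.log (∑ c', w b c')) := by
      refine Finset.sum_congr rfl fun b _ => ?_
      rw [← Finset.sum_mul]
      simp [Real.negMulLog]
    have e2 : (∑ c, Real.negMulLog (∑ b, w b c))
        = ∑ b, ∑ c, w b c * (- Real.log (∑ b', w b' c)) := by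
      rw [Finset.sum_comm (f := fun b c => w b c * (- Real.log (∑ b', w b' c)))]
      refine Finset.sum_congr rfl fun c _ => ?_
      rw [← Finset.sum_mul]
      simp [Real.negMulLog]
    have e3 : Real.negMulLog (∑ b, ∑ c, w b c)
        = ∑ b, ∑ c, w b c * (- Real.log (∑ b', ∑ c', w b' c')) := by
      simp_rw [← Finset.sum_mul]
      simp [Real.negMulLog]
    rw [e1, e2, e3, ← Finset.sum_add_distrib, ← Finset.sum_add_distrib,
        ← Finset.sum_sub_distrib]
    refine Finset.sum_congr rfl fun b _ => ?_
    rw [← Finset.sum_add_distrib, ← Finset.sum_add_distrib, ← Finset.sum_sub_distrib]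
    refine Finset.sum_congr rfl fun c _ => ?_
    simp only [Real.negMulLog]
    ring
  have bound : (∑ b, ∑ c, w b c *
        (Real.log (∑ c', w b c') + Real.log (∑ b', w b' c)
          - Real.log (w b c) - Real.log (∑ b', ∑ c', w b' c')))
      ≤ ∑ b, ∑ c, ((∑ c', w b c') * (∑ b', w b' c) / (∑ b', ∑ c', w b' c') - w b c) :=
    Finset.sum_le_sum fun b _ => Finset.sum_le_sum fun c _ => key b c
  have final : (∑ b, ∑ c, ((∑ c', w b c') * (∑ b', w b' c) / (∑ b', ∑ c', w b' c') - w b c))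
      = 0 := by
    simp_rw [Finset.sum_sub_distrib]
    have h1 : (∑ b, ∑ c, (∑ c', w b c') * (∑ b', w b' c) / (∑ b', ∑ c', w b' c'))
        = (∑ b, ∑ c', w b c') * (∑ c, ∑ b', w b' c) / (∑ b', ∑ c', w b' c') := by
      rw [Finset.sum_mul_sum, Finset.sum_div]
      exact Finset.sum_congr rfl fun b _ => by rw [Finset.sum_div]
    rw [h1]
    have hTc : (∑ c, ∑ b', w b' c) = ∑ b', ∑ c', w b' c' := Finset.sum_comm
    rw [hTc]
    rcases eq_or_lt_of_le hT0 with hz | hp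
    · rw [← hz]; simp
    · field_simp
      ring
  linarith


lemma sum_filter_congr {Ω : Type} [Fintype Ω] (p : Ω → ℝ) (P Q : Ω → Prop)
    (h1 : DecidablePred P) (h2 : DecidablePred Q) (h : ∀ ω, P ω ↔ Q ω) :
    ∑ ω ∈ @Finset.filter _ P h1 Finset.univ, p ω
      = ∑ ω ∈ @Finset.filter _ Q h2 Finset.univ, p ω := by
  apply Finset.sum_congr _ (fun _ _ => rfl)
  ext ω
  rw [@Finset.mem_filter _ _ h1, @Finset.mem_filter _ _ h2]
  simp [h ω]

lemma entOf_submod {Ω A B C : Type} [Fintype Ω] [Fintype A] [Fintype B] [Fintype C]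
    (p : Ω → ℝ) (hp0 : ∀ ω, 0 ≤ p ω) (f : Ω → A) (g : Ω → B) (h : Ω → C) :
    entOf p (fun ω => (f ω, g ω, h ω)) + entOf p f ≤
      entOf p (fun ω => (f ω, g ω)) + entOf p (fun ω => (f ω, h ω)) := by
  set w : A → B → C → ℝ := fun a b c =>
    ∑ ω ∈ Finset.univ.filter (fun ω => (f ω, g ω, h ω) = (a, b, c)), p ω with hwdef
  have hw0 : ∀ a b c, 0 ≤ w a b c := fun a b c => Finset.sum_nonneg fun ω _ => hp0 ω
  -- marginal identities
  have hbc : ∀ a b, (∑ c, w a b c)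
      = ∑ ω ∈ Finset.univ.filter (fun ω => (f ω, g ω) = (a, b)), p ω := by
    intro a b
    have hfilt : ∀ c, Finset.univ.filter (fun ω => (f ω, g ω, h ω) = (a, b, c))
        = (Finset.univ.filter (fun ω => (f ω, g ω) = (a, b))).filter (fun ω => h ω = c) := by
      intro c; ext ω; simp [Prod.ext_iff]; try tauto
    calc (∑ c, w a b c)
        = ∑ c, ∑ ω ∈ (Finset.univ.filter (fun ω => (f ω, g ω) = (a, b))).filter
            (fun ω => h ω = c), p ω :=
          Finset.sum_congr rfl fun c _ => by simp only [hwdef]; rw [hfilt c]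
      _ = _ := Finset.sum_fiberwise _ _ _
  have hcb : ∀ a c, (∑ b, w a b c)
      = ∑ ω ∈ Finset.univ.filter (fun ω => (f ω, h ω) = (a, c)), p ω := by
    intro a c
    have hfilt : ∀ b, Finset.univ.filter (fun ω => (f ω, g ω, h ω) = (a, b, c))
        = (Finset.univ.filter (fun ω => (f ω, h ω) = (a, c))).filter (fun ω => g ω = b) := by
      intro b; ext ω; simp [Prod.ext_iff]; try tauto
    calc (∑ b, w a b c)
        = ∑ b, ∑ ω ∈ (Finset.univ.filter (fun ω => (f ω, h ω) = (a, c))).filter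
            (fun ω => g ω = b), p ω :=
          Finset.sum_congr rfl fun b _ => by simp only [hwdef]; rw [hfilt b]
      _ = _ := Finset.sum_fiberwise _ _ _
  have ha : ∀ a, (∑ b, ∑ c, w a b c)
      = ∑ ω ∈ Finset.univ.filter (fun ω => f ω = a), p ω := by
    intro a
    have hfilt : ∀ b, Finset.univ.filter (fun ω => (f ω, g ω) = (a, b))
        = (Finset.univ.filter (fun ω => f ω = a)).filter (fun ω => g ω = b) := by
      intro b; ext ω; simp [Prod.ext_iff]; try tauto
    have step : (∑ b, ∑ c, w a b c)
        = ∑ b, ∑ ω ∈ (Finset.univ.filter (fun ω => f ω = a)).filter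
            (fun ω => g ω = b), p ω := by
      refine Finset.sum_congr rfl fun b _ => ?_
      rw [hbc a b, hfilt b]
    rw [step]
    exact Finset.sum_fiberwise _ _ _
  -- rewrite the four entropies
  have E3 : entOf p (fun ω => (f ω, g ω, h ω)) = ∑ a, ∑ b, ∑ c, Real.negMulLog (w a b c) := by
    unfold entOf
    rw [Fintype.sum_prod_type]
    refine Finset.sum_congr rfl fun a _ => ?_
    rw [Fintype.sum_prod_type]
    simp only [hwdef]
  have E1 : entOf p f = ∑ a, Real.negMulLog (∑ b, ∑ c, w a b c) := by
    unfold entOf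
    exact Finset.sum_congr rfl fun a _ => by rw [ha a]
  have Efg : entOf p (fun ω => (f ω, g ω)) = ∑ a, ∑ b, Real.negMulLog (∑ c, w a b c) := by
    unfold entOf
    rw [Fintype.sum_prod_type]
    refine Finset.sum_congr rfl fun a _ => Finset.sum_congr rfl fun b _ => ?_
    rw [hbc a b]
    apply congrArg Real.negMulLog; apply sum_filter_congr; intro ω; exact Iff.rfl
  have Efh : entOf p (fun ω => (f ω, h ω)) = ∑ a, ∑ c, Real.negMulLog (∑ b, w a b c) := by
    unfold entOf
    rw [Fintype.sum_prod_type]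
    refine Finset.sum_congr rfl fun a _ => Finset.sum_congr rfl fun c _ => ?_
    rw [hcb a c]
    apply congrArg Real.negMulLog; apply sum_filter_congr; intro ω; exact Iff.rfl
  rw [E3, E1, Efg, Efh, ← Finset.sum_add_distrib, ← Finset.sum_add_distrib]
  exact Finset.sum_le_sum fun a _ => mi_nonneg (w a) (hw0 a)



lemma frac_subadd {n : ℕ} (g : Finset (Fin n) → ℝ)
    (hsub : ∀ A B, g (A ∪ B) + g (A ∩ B) ≤ g A + g B)
    (hempty : g ∅ = 0)
    {ι : Type} [Fintype ι] (S : ι → Finset (Fin n)) (γ : ι → ℝ) (hγ : ∀ k, 0 ≤ γ k)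
    (hfrac : ∀ i : Fin n, ∑ k ∈ Finset.univ.filter (fun k => i ∈ S k), γ k = 1) :
    g Finset.univ ≤ ∑ k, γ k * g (S k) := by
  set m : ℕ → Finset (Fin n) := fun t => Finset.univ.filter (fun j : Fin n => (j : ℕ) < t)
    with hm
  set d : Fin n → ℝ := fun i => g (m ((i : ℕ) + 1)) - g (m (i : ℕ)) with hd
  have hm0 : m 0 = ∅ := by ext j; simp [hm]
  have hmn : m n = Finset.univ := by ext j; simp [hm, j.isLt]
  -- telescoping
  have tele : ∀ F : Finset (Fin n),
      ∑ t ∈ Finset.range n, (g (F ∩ m (t+1)) - g (F ∩ m t)) = g F := by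
    intro F
    rw [Finset.sum_range_sub (fun t => g (F ∩ m t))]
    rw [hm0, hmn]
    simp [hempty]
  -- increments dominated
  have dom : ∀ (F : Finset (Fin n)) (t : ℕ) (ht : t < n),
      (if (⟨t, ht⟩ : Fin n) ∈ F then g (m (t+1)) - g (m t) else 0)
        ≤ g (F ∩ m (t+1)) - g (F ∩ m t) := by
    intro F t ht
    by_cases hin : (⟨t, ht⟩ : Fin n) ∈ F
    · rw [if_pos hin]
      have hAB : (F ∩ m (t+1)) ∪ m t = m (t+1) := by
        ext j
        simp only [hm, Finset.mem_union, Finset.mem_inter, Finset.mem_filter, Finset.mem_univ,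
          true_and]
        constructor
        · rintro (⟨_, hj⟩ | hj) <;> omega
        · intro hj
          rcases Nat.lt_or_ge (j : ℕ) t with h | h
          · right; exact h
          · left
            have hjt : j = (⟨t, ht⟩ : Fin n) := Fin.ext (show (j : ℕ) = t by omega)
            exact ⟨hjt ▸ hin, hj⟩
      have hcap : (F ∩ m (t+1)) ∩ m t = F ∩ m t := by
        ext j
        simp only [hm, Finset.mem_inter, Finset.mem_filter, Finset.mem_univ, true_and]
        constructor
        · rintro ⟨⟨h1, _⟩, h3⟩; exact ⟨h1, h3⟩
        · rintro ⟨h1, h2⟩; exact ⟨⟨h1, by omega⟩, h2⟩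
      have := hsub (F ∩ m (t+1)) (m t)
      rw [hAB, hcap] at this
      linarith
    · rw [if_neg hin]
      have heq : F ∩ m (t+1) = F ∩ m t := by
        ext j
        simp only [hm, Finset.mem_inter, Finset.mem_filter, Finset.mem_univ, true_and]
        constructor
        · rintro ⟨h1, h2⟩
          refine ⟨h1, ?_⟩
          rcases Nat.lt_or_ge (j : ℕ) t with h | h
          · exact h
          · exfalso
            have hjt : j = (⟨t, ht⟩ : Fin n) := Fin.ext (show (j : ℕ) = t by omega)
            exact hin (hjt ▸ h1)
        · rintro ⟨h1, h2⟩; exact ⟨h1, by omega⟩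
      rw [heq]
      simp
  -- per-F bound
  have perF : ∀ F : Finset (Fin n),
      (∑ i : Fin n, (if i ∈ F then d i else 0)) ≤ g F := by
    intro F
    have conv : (∑ i : Fin n, (if i ∈ F then d i else 0))
        = ∑ t ∈ Finset.range n,
            (if h : t < n then (if (⟨t, h⟩ : Fin n) ∈ F then d ⟨t, h⟩ else 0) else 0) := by
      rw [← Fin.sum_univ_eq_sum_range
        (fun t => if h : t < n then (if (⟨t, h⟩ : Fin n) ∈ F then d ⟨t, h⟩ else 0) else 0) n]
      refine Finset.sum_congr rfl fun i _ => ?_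
      simp [i.is_lt]
    rw [conv, ← tele F]
    refine Finset.sum_le_sum fun t htr => ?_
    have ht : t < n := Finset.mem_range.1 htr
    rw [dif_pos ht]
    exact dom F t ht
  -- assemble
  have huniv : g Finset.univ = ∑ i : Fin n, d i := by
    have : ∑ i : Fin n, d i = ∑ t ∈ Finset.range n, (g (m (t+1)) - g (m t)) :=
      Fin.sum_univ_eq_sum_range (fun t => g (m (t+1)) - g (m t)) n
    rw [this, Finset.sum_range_sub (fun t => g (m t)), hm0, hmn, hempty]
    ring
  have swap : ∑ i : Fin n, d i = ∑ k, γ k * ∑ i : Fin n, (if i ∈ S k then d i else 0) := by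
    calc ∑ i : Fin n, d i
        = ∑ i : Fin n, (∑ k ∈ Finset.univ.filter (fun k => i ∈ S k), γ k) * d i := by
          refine Finset.sum_congr rfl fun i _ => ?_
          rw [hfrac i, one_mul]
      _ = ∑ i : Fin n, ∑ k : ι, (if i ∈ S k then γ k * d i else 0) := by
          refine Finset.sum_congr rfl fun i _ => ?_
          rw [Finset.sum_mul, Finset.sum_filter]
      _ = ∑ k : ι, ∑ i : Fin n, (if i ∈ S k then γ k * d i else 0) := Finset.sum_comm
      _ = ∑ k, γ k * ∑ i : Fin n, (if i ∈ S k then d i else 0) := by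
          refine Finset.sum_congr rfl fun k _ => ?_
          rw [Finset.mul_sum]
          refine Finset.sum_congr rfl fun i _ => ?_
          split <;> simp
  rw [huniv, swap]
  exact Finset.sum_le_sum fun k _ =>
    mul_le_mul_of_nonneg_left (perF (S k)) (hγ k)


section Helpers
variable {Ω A B : Type} [Fintype Ω] [Nonempty Ω] [Fintype A] [Fintype B]
  (p : Ω → ℝ)

lemma entOf_pair_eq_right (hp0 : ∀ ω, 0 ≤ p ω) (f : Ω → A) (g : Ω → B)
    (hdet : ∀ ω ω', g ω = g ω' → f ω = f ω') :
    entOf p (fun ω => (f ω, g ω)) = entOf p g := by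
  refine entOf_congr p hp0 _ _ fun ω ω' => ?_
  constructor
  · intro h; exact congrArg Prod.snd h
  · intro h; rw [Prod.mk.injEq]; exact ⟨hdet _ _ h, h⟩

lemma entOf_pair_eq_left (hp0 : ∀ ω, 0 ≤ p ω) (f : Ω → A) (g : Ω → B)
    (hdet : ∀ ω ω', f ω = f ω' → g ω = g ω') :
    entOf p (fun ω => (f ω, g ω)) = entOf p f := by
  refine entOf_congr p hp0 _ _ fun ω ω' => ?_
  constructor
  · intro h; exact congrArg Prod.fst h
  · intro h; rw [Prod.mk.injEq]; exact ⟨h, hdet _ _ h⟩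

end Helpers

section Main
variable {n : ℕ} {𝒳 𝒴 : Fin n → Type} [∀ i, Fintype (𝒳 i)] [∀ i, Fintype (𝒴 i)]
  [∀ i, Nonempty (𝒳 i)] [∀ i, Nonempty (𝒴 i)]

instance : Nonempty (∀ i, 𝒳 i × 𝒴 i) :=
  ⟨fun i => ⟨Classical.arbitrary _, Classical.arbitrary _⟩⟩

variable (p : (∀ i, 𝒳 i × 𝒴 i) → ℝ)

noncomputable def HXf (F : Finset (Fin n)) : ℝ :=
  entOf p fun ω (i : {i // i ∈ F}) => (ω i.1).1
noncomputable def HYf (F : Finset (Fin n)) : ℝ :=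
  entOf p fun ω (i : {i // i ∈ F}) => (ω i.1).2
noncomputable def HZf (F : Finset (Fin n)) : ℝ :=
  entOf p fun ω (i : {i // i ∈ F}) => ω i.1
noncomputable def HYall : ℝ := entOf p fun ω (i : Fin n) => (ω i).2
noncomputable def HZYf (F : Finset (Fin n)) : ℝ :=
  entOf p fun ω => ((fun i : {i // i ∈ F} => ω i.1), (fun i : Fin n => (ω i).2))

lemma perF_A (hp0 : ∀ ω, 0 ≤ p ω) (F : Finset (Fin n)) :
    HZYf p F + HYf p F ≤ HZf p F + HYall p := by
  have sub := entOf_submod p hp0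
    (fun ω (i : {i // i ∈ F}) => (ω i.1).2)
    (fun ω (i : {i // i ∈ F}) => ω i.1)
    (fun ω (i : Fin n) => (ω i).2)
  have c1 : entOf p (fun ω => ((fun i : {i // i ∈ F} => (ω i.1).2),
        (fun i : {i // i ∈ F} => ω i.1), (fun i : Fin n => (ω i).2)))
      = HZYf p F := by
    refine entOf_pair_eq_right p hp0 _
      (fun ω => ((fun i : {i // i ∈ F} => ω i.1), (fun i : Fin n => (ω i).2)))
      (fun ω ω' h => ?_)
    have h1 := congrArg Prod.fst h
    funext i
    exact congrArg Prod.snd (congrFun h1 i)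
  have c2 : entOf p (fun ω => ((fun i : {i // i ∈ F} => (ω i.1).2),
        (fun i : {i // i ∈ F} => ω i.1)))
      = HZf p F := by
    refine entOf_pair_eq_right p hp0 _ _ (fun ω ω' h => ?_)
    funext i
    exact congrArg Prod.snd (congrFun h i)
  have c3 : entOf p (fun ω => ((fun i : {i // i ∈ F} => (ω i.1).2),
        (fun i : Fin n => (ω i).2)))
      = HYall p := by
    refine entOf_pair_eq_right p hp0 _ _ (fun ω ω' h => ?_)
    funext i
    show (ω i.1).2 = (ω' i.1).2
    exact congrFun h i.1
  rw [c1, c2, c3] at sub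
  have : entOf p (fun ω (i : {i // i ∈ F}) => (ω i.1).2) = HYf p F := rfl
  rw [this] at sub
  linarith

lemma submod_A (hp0 : ∀ ω, 0 ≤ p ω) (A B : Finset (Fin n)) :
    HZYf p (A ∪ B) + HZYf p (A ∩ B) ≤ HZYf p A + HZYf p B := by
  have sub := entOf_submod p hp0
    (fun ω => ((fun i : {i // i ∈ A ∩ B} => ω i.1), (fun i : Fin n => (ω i).2)))
    (fun ω (i : {i // i ∈ A}) => ω i.1)
    (fun ω (i : {i // i ∈ B}) => ω i.1)
  have c1 : entOf p (fun ω =>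
        (((fun i : {i // i ∈ A ∩ B} => ω i.1), (fun i : Fin n => (ω i).2)),
          (fun i : {i // i ∈ A} => ω i.1), (fun i : {i // i ∈ B} => ω i.1)))
      = HZYf p (A ∪ B) := by
    refine entOf_congr p hp0 _ _ fun ω ω' => ?_
    constructor
    · intro h
      have hA := congrFun (congrArg (Prod.fst ∘ Prod.snd) h)
      have hB := congrFun (congrArg (Prod.snd ∘ Prod.snd) h)
      have hY := congrFun (congrArg (Prod.snd ∘ Prod.fst) h)
      rw [Prod.mk.injEq]
      refine ⟨funext fun i => ?_, funext fun j => hY j⟩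
      rcases Finset.mem_union.1 i.2 with hi | hi
      · exact hA ⟨i.1, hi⟩
      · exact hB ⟨i.1, hi⟩
    · intro h
      have hU := congrFun (congrArg Prod.fst h)
      have hY := congrFun (congrArg Prod.snd h)
      have coord : ∀ i : Fin n, i ∈ A ∪ B → ω i = ω' i := by
        intro i hi
        exact hU ⟨i, hi⟩
      refine Prod.ext (Prod.ext ?_ ?_) (Prod.ext ?_ ?_) <;> funext i
      · exact coord i.1 (Finset.mem_union.2 (Or.inl (Finset.mem_inter.1 i.2).1))
      · exact hY i
      · exact coord i.1 (Finset.mem_union.2 (Or.inl i.2))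
      · exact coord i.1 (Finset.mem_union.2 (Or.inr i.2))
  have c2 : entOf p (fun ω =>
        (((fun i : {i // i ∈ A ∩ B} => ω i.1), (fun i : Fin n => (ω i).2)),
          (fun i : {i // i ∈ A} => ω i.1)))
      = HZYf p A := by
    refine entOf_congr p hp0 _ _ fun ω ω' => ?_
    constructor
    · intro h
      have hA := congrFun (congrArg Prod.snd h)
      have hY := congrFun (congrArg (Prod.snd ∘ Prod.fst) h)
      rw [Prod.mk.injEq]
      exact ⟨funext fun i => hA i, funext fun j => hY j⟩
    · intro h
      have hA := congrFun (congrArg Prod.fst h)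
      have hY := congrFun (congrArg Prod.snd h)
      refine Prod.ext (Prod.ext ?_ ?_) ?_
      · funext i
        exact hA ⟨i.1, (Finset.mem_inter.1 i.2).1⟩
      · funext i; exact hY i
      · funext i; exact hA i
  have c3 : entOf p (fun ω =>
        (((fun i : {i // i ∈ A ∩ B} => ω i.1), (fun i : Fin n => (ω i).2)),
          (fun i : {i // i ∈ B} => ω i.1)))
      = HZYf p B := by
    refine entOf_congr p hp0 _ _ fun ω ω' => ?_
    constructor
    · intro h
      have hB := congrFun (congrArg Prod.snd h)
      have hY := congrFun (congrArg (Prod.snd ∘ Prod.fst) h)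
      rw [Prod.mk.injEq]
      exact ⟨funext fun i => hB i, funext fun j => hY j⟩
    · intro h
      have hB := congrFun (congrArg Prod.fst h)
      have hY := congrFun (congrArg Prod.snd h)
      refine Prod.ext (Prod.ext ?_ ?_) ?_
      · funext i
        exact hB ⟨i.1, (Finset.mem_inter.1 i.2).2⟩
      · funext i; exact hY i
      · funext i; exact hB i
  rw [c1, c2, c3] at sub
  have c4 : entOf p (fun ω =>
        ((fun i : {i // i ∈ A ∩ B} => ω i.1), (fun i : Fin n => (ω i).2)))
      = HZYf p (A ∩ B) := rfl
  rw [c4] at sub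
  linarith

lemma HZY_empty (hp0 : ∀ ω, 0 ≤ p ω) : HZYf p ∅ = HYall p := by
  refine entOf_pair_eq_right p hp0 _ _ (fun ω ω' h => ?_)
  funext i
  exact absurd i.2 (Finset.notMem_empty i.1)

lemma HZY_univ (hp0 : ∀ ω, 0 ≤ p ω) : HZYf p Finset.univ = HZf p Finset.univ := by
  refine entOf_pair_eq_left p hp0 _ _ (fun ω ω' h => ?_)
  funext i
  exact congrArg Prod.snd (congrFun h ⟨i, Finset.mem_univ i⟩)

lemma HY_univ_eq (hp0 : ∀ ω, 0 ≤ p ω) : HYf p Finset.univ = HYall p := by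
  refine entOf_congr p hp0 _ _ fun ω ω' => ?_
  constructor
  · intro h
    funext i
    exact congrFun h ⟨i, Finset.mem_univ i⟩
  · intro h
    funext i
    exact congrFun h i.1

lemma stepB (hp0 : ∀ ω, 0 ≤ p ω) (F : Finset (Fin n)) :
    HZf p F ≤ HXf p F +
      ∑ i ∈ F, (entOf p (fun ω => ω i) - entOf p (fun ω => (ω i).1)) := by
  -- B1 : HZ F ≤ H(X_F, Y_F)
  have B1 : HZf p F ≤ entOf p (fun ω =>
      ((fun i : {i // i ∈ F} => (ω i.1).1), (fun i : {i // i ∈ F} => (ω i.1).2))) := by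
    refine entOf_le_det p hp0 _ _ (fun ω ω' h => ?_)
    have hX := congrFun (congrArg Prod.fst h)
    have hY := congrFun (congrArg Prod.snd h)
    funext i
    exact Prod.ext (hX i) (hY i)
  -- B2 : conditional subadditivity by induction on G
  have B2 : ∀ G : Finset (Fin n),
      entOf p (fun ω =>
        ((fun i : {i // i ∈ F} => (ω i.1).1), (fun i : {i // i ∈ G} => (ω i.1).2)))
      ≤ HXf p F + ∑ i ∈ G,
          (entOf p (fun ω => ((fun j : {j // j ∈ F} => (ω j.1).1), (ω i).2)) - HXf p F) := by
    intro G
    induction G using Finset.induction_on with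
    | empty =>
      have e : entOf p (fun ω =>
          ((fun i : {i // i ∈ F} => (ω i.1).1), (fun i : {i // i ∈ (∅ : Finset (Fin n))} => (ω i.1).2)))
          = HXf p F := by
        refine entOf_pair_eq_left p hp0 _ _ (fun ω ω' h => ?_)
        funext i
        exact absurd i.2 (Finset.notMem_empty i.1)
      rw [e]
      simp
    | insert j G hj ih =>
      have sub := entOf_submod p hp0
        (fun ω (i : {i // i ∈ F}) => (ω i.1).1)
        (fun ω (i : {i // i ∈ G}) => (ω i.1).2)
        (fun ω => (ω j).2)
      have c1 : entOf p (fun ω =>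
            ((fun i : {i // i ∈ F} => (ω i.1).1), (fun i : {i // i ∈ G} => (ω i.1).2), (ω j).2))
          = entOf p (fun ω =>
            ((fun i : {i // i ∈ F} => (ω i.1).1), (fun i : {i // i ∈ insert j G} => (ω i.1).2))) := by
        refine entOf_congr p hp0 _ _ fun ω ω' => ?_
        constructor
        · intro h
          have hX := congrFun (congrArg Prod.fst h)
          have hG := congrFun (congrArg (Prod.fst ∘ Prod.snd) h)
          have hj' := congrArg (Prod.snd ∘ Prod.snd) h
          rw [Prod.mk.injEq]
          refine ⟨funext fun i => hX i, funext fun i => ?_⟩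
          rcases Finset.mem_insert.1 i.2 with hi | hi
          · show (ω i.1).2 = (ω' i.1).2
            rw [hi]
            exact hj'
          · exact hG ⟨i.1, hi⟩
        · intro h
          have hX := congrFun (congrArg Prod.fst h)
          have hI := congrFun (congrArg Prod.snd h)
          refine Prod.ext ?_ (Prod.ext ?_ ?_)
          · funext i; exact hX i
          · funext i
            exact hI ⟨i.1, Finset.mem_insert_of_mem i.2⟩
          · exact hI ⟨j, Finset.mem_insert_self j G⟩
      rw [c1] at sub
      have hXF : entOf p (fun ω (i : {i // i ∈ F}) => (ω i.1).1) = HXf p F := rfl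
      rw [hXF] at sub
      rw [Finset.sum_insert hj]
      linarith [sub, ih]
  -- B3 : per-coordinate bound
  have B3 : ∀ i ∈ F,
      entOf p (fun ω => ((fun j : {j // j ∈ F} => (ω j.1).1), (ω i).2)) - HXf p F
      ≤ entOf p (fun ω => ω i) - entOf p (fun ω => (ω i).1) := by
    intro i hiF
    have sub := entOf_submod p hp0
      (fun ω => (ω i).1)
      (fun ω => (ω i).2)
      (fun ω (j : {j // j ∈ F}) => (ω j.1).1)
    have c1 : entOf p (fun ω => ((ω i).1, (ω i).2, (fun j : {j // j ∈ F} => (ω j.1).1)))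
        = entOf p (fun ω => ((fun j : {j // j ∈ F} => (ω j.1).1), (ω i).2)) := by
      refine entOf_congr p hp0 _ _ fun ω ω' => ?_
      constructor
      · intro h
        have h1 := congrArg (Prod.fst ∘ Prod.snd) h
        have h2 := congrArg (Prod.snd ∘ Prod.snd) h
        rw [Prod.mk.injEq]
        exact ⟨h2, h1⟩
      · intro h
        have h1 := congrFun (congrArg Prod.fst h)
        have h2 := congrArg Prod.snd h
        refine Prod.ext ?_ (Prod.ext ?_ ?_)
        · exact h1 ⟨i, hiF⟩
        · exact h2
        · funext j; exact h1 j
    have c2 : entOf p (fun ω => ((ω i).1, (ω i).2))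
        = entOf p (fun ω => ω i) := by
      refine entOf_congr p hp0 _ _ fun ω ω' => ?_
      constructor
      · intro h
        have h1 := congrArg Prod.fst h
        have h2 := congrArg Prod.snd h
        exact Prod.ext h1 h2
      · intro h
        rw [Prod.mk.injEq]
        exact ⟨congrArg Prod.fst h, congrArg Prod.snd h⟩
    have c3 : entOf p (fun ω => ((ω i).1, (fun j : {j // j ∈ F} => (ω j.1).1)))
        = HXf p F := by
      refine entOf_pair_eq_right p hp0 _ _ (fun ω ω' h => ?_)
      exact congrFun h ⟨i, hiF⟩
    rw [c1, c2, c3] at sub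
    linarith
  have B2F := B2 F
  have sumle : ∑ i ∈ F,
        (entOf p (fun ω => ((fun j : {j // j ∈ F} => (ω j.1).1), (ω i).2)) - HXf p F)
      ≤ ∑ i ∈ F, (entOf p (fun ω => ω i) - entOf p (fun ω => (ω i).1)) :=
    Finset.sum_le_sum B3
  calc HZf p F ≤ _ := B1
    _ ≤ _ := B2F
    _ ≤ _ := by linarith

lemma stepC (hp0 : ∀ ω, 0 ≤ p ω) : HXf p Finset.univ ≤ HZf p Finset.univ := by
  refine entOf_le_det p hp0 _ _ (fun ω ω' h => ?_)
  funext i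
  exact congrArg Prod.fst (congrFun h i)




lemma stepA (hp0 : ∀ ω, 0 ≤ p ω) {ι : Type} [Fintype ι] (S : ι → Finset (Fin n))
    (γ : ι → ℝ) (hpos : ∀ k, 0 < γ k)
    (hfrac : ∀ i : Fin n, ∑ k ∈ Finset.univ.filter (fun k => i ∈ S k), γ k = 1) :
    (∑ k, γ k * HYf p (S k)) - HYf p Finset.univ ≤
      (∑ k, γ k * HZf p (S k)) - HZf p Finset.univ := by
  set g : Finset (Fin n) → ℝ := fun F => HZYf p F - HYall p with hg
  have hsub : ∀ A B, g (A ∪ B) + g (A ∩ B) ≤ g A + g B := by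
    intro A B
    have := submod_A p hp0 A B
    simp only [hg]
    linarith
  have hempty : g ∅ = 0 := by simp [hg, HZY_empty p hp0]
  have hfs := frac_subadd g hsub hempty S γ (fun k => (hpos k).le) hfrac
  have hgu : g Finset.univ = HZf p Finset.univ - HYall p := by
    simp [hg, HZY_univ p hp0]
  have h1 : ∑ k, γ k * HYf p (S k)
      ≤ ∑ k, γ k * (HZf p (S k) + HYall p - HZYf p (S k)) := by
    refine Finset.sum_le_sum fun k _ => mul_le_mul_of_nonneg_left ?_ (hpos k).le
    have := perF_A p hp0 (S k)
    linarith
  have h2 : ∑ k, γ k * (HZf p (S k) + HYall p - HZYf p (S k))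
      = ∑ k, γ k * HZf p (S k) - ∑ k, γ k * g (S k) := by
    rw [← Finset.sum_sub_distrib]
    refine Finset.sum_congr rfl fun k _ => ?_
    simp only [hg]
    ring
  have h3 : HYf p Finset.univ = HYall p := HY_univ_eq p hp0
  rw [hgu] at hfs
  linarith

lemma swap_c {ι : Type} [Fintype ι] (S : ι → Finset (Fin n)) (γ : ι → ℝ)
    (hfrac : ∀ i : Fin n, ∑ k ∈ Finset.univ.filter (fun k => i ∈ S k), γ k = 1)
    (c : Fin n → ℝ) :
    ∑ k, γ k * ∑ i ∈ S k, c i = ∑ i : Fin n, c i := by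
  have e1 : ∀ k, γ k * ∑ i ∈ S k, c i
      = ∑ i : Fin n, (if i ∈ S k then γ k * c i else 0) := by
    intro k
    rw [Finset.mul_sum, Finset.sum_ite_mem, Finset.univ_inter]
  calc ∑ k, γ k * ∑ i ∈ S k, c i
      = ∑ k, ∑ i : Fin n, (if i ∈ S k then γ k * c i else 0) :=
        Finset.sum_congr rfl fun k _ => e1 k
    _ = ∑ i : Fin n, ∑ k, (if i ∈ S k then γ k * c i else 0) := Finset.sum_comm
    _ = ∑ i : Fin n, c i := by
        refine Finset.sum_congr rfl fun i _ => ?_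
        rw [← Finset.sum_filter]
        rw [← Finset.sum_mul, hfrac i, one_mul]

end Main

theorem stmt_16 (n : ℕ) (hn : 2 ≤ n)
    (𝒳 𝒴 : Fin n → Type) [∀ i, Fintype (𝒳 i)] [∀ i, Fintype (𝒴 i)]
    [∀ i, Nonempty (𝒳 i)] [∀ i, Nonempty (𝒴 i)]
    (p : (∀ i, 𝒳 i × 𝒴 i) → ℝ)
    (hp0 : ∀ ω, 0 ≤ p ω) (hp1 : ∑ ω : ∀ i, 𝒳 i × 𝒴 i, p ω = 1)
    (ι : Type) [Fintype ι] (S : ι → Finset (Fin n)) (γ : ι → ℝ)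
    (hproper : ∀ k, S k ≠ Finset.univ)
    (hpos : ∀ k, 0 < γ k)
    (hsep : ∀ i j : Fin n, i ≠ j → ¬ (∀ k, i ∈ S k ↔ j ∈ S k))
    (hfrac : ∀ i : Fin n, ∑ k ∈ Finset.univ.filter (fun k => i ∈ S k), γ k = 1) :
    (∑ k : ι, γ k * entOf p (fun ω (i : {i // i ∈ S k}) => (ω i.1).2)) -
        entOf p (fun ω (i : {i // i ∈ (Finset.univ : Finset (Fin n))}) => (ω i.1).2) ≤
      (∑ k : ι, γ k * entOf p (fun ω (i : {i // i ∈ S k}) => (ω i.1).1)) -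
        entOf p (fun ω (i : {i // i ∈ (Finset.univ : Finset (Fin n))}) => (ω i.1).1) +
      ∑ i : Fin n, (entOf p (fun ω => ω i) - entOf p (fun ω => (ω i).1)) := by
  show (∑ k : ι, γ k * HYf p (S k)) - HYf p Finset.univ ≤
      (∑ k : ι, γ k * HXf p (S k)) - HXf p Finset.univ +
      ∑ i : Fin n, (entOf p (fun ω => ω i) - entOf p (fun ω => (ω i).1))
  have hA := stepA p hp0 S γ hpos hfrac
  have hB : ∀ k, HZf p (S k) ≤ HXf p (S k) +
      ∑ i ∈ S k, (entOf p (fun ω => ω i) - entOf p (fun ω => (ω i).1)) :=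
    fun k => stepB p hp0 (S k)
  have hC := stepC p hp0
  have hsum : ∑ k, γ k * HZf p (S k)
      ≤ ∑ k, (γ k * HXf p (S k) +
          γ k * ∑ i ∈ S k, (entOf p (fun ω => ω i) - entOf p (fun ω => (ω i).1))) := by
    refine Finset.sum_le_sum fun k _ => ?_
    calc γ k * HZf p (S k)
        ≤ γ k * (HXf p (S k) +
            ∑ i ∈ S k, (entOf p (fun ω => ω i) - entOf p (fun ω => (ω i).1))) :=
          mul_le_mul_of_nonneg_left (hB k) (hpos k).le
      _ = _ := mul_add _ _ _
  rw [Finset.sum_add_distrib] at hsum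
  have hswap := swap_c S γ hfrac
    (fun i => entOf p (fun ω => ω i) - entOf p (fun ω => (ω i).1))
  rw [hswap] at hsum
  linarith
end

section
/- Let X_1, …, X_n (n ≥ 2) be jointly distributed random variables on finite alphabets, and let γ be a fractional partition with respect to a family 𝓕 of subsets of [n] satisfying the standing assumptions. Define the truncated family 𝓕̃ = {F ∩ [n−1] : F ∈ 𝓕} (with multiplicity) and the weights γ̃(F ∩ [n−1]) = γ(F). Then (𝓕, γ)-MI(X_1; …; X_n) = (𝓕̃, γ̃)-MI(X_1; …; X_{n−1}) + ∑_{F ∈ 𝓕 : n ∈ F} γ(F) · I(X_n ; X_{[n−1] ∖ F} | X_{[n−1] ∩ F}). -/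
/-!
For `n ∈ F`, the chain rule telescopes the conditional mutual information
`I(X_n ; X_{[n-1] ∖ F} | X_{F ∖ n})` into `(H(X_F) - H(X_{F ∖ n})) + (H(X_{[n-1]}) - H(X_{[n]}))`.
Weighting by `γ(F)` and summing over `F ∋ n`, the second bracket is counted exactly once because
`γ` is a fractional partition at `n`, while the first recovers the difference between the
`(𝓕, γ)` and `(𝓕̃, γ̃)` weighted entropies (the members `F ∌ n` are unchanged by truncation).
Nothing about entropy is used: the identity holds for every set function.
-/

open Finset
open scoped Classical BigOperators

/-- Entropy of the marginal of `p` on the coordinates in `F`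
    (`H(X_F) = ∑ negMulLog (p_F)`, with `0 log 0 = 0`). -/
noncomputable def Hent {n : ℕ} {𝒳 : Fin n → Type} [∀ i, Fintype (𝒳 i)]
    (p : (∀ i, 𝒳 i) → ℝ) (F : Finset (Fin n)) : ℝ :=
  ∑ y : (i : {i // i ∈ F}) → 𝒳 i.1,
    Real.negMulLog
      (∑ x ∈ Finset.univ.filter (fun x : ∀ i, 𝒳 i => ∀ i : {i // i ∈ F}, x i.1 = y i), p x)

namespace Finset

variable {α ι : Type*} [DecidableEq α] [Fintype ι]

/-- `I(A ; B | C)` for the set function `H` in place of the joint entropy. -/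
def condMutualInfo (H : Finset α → ℝ) (A B C : Finset α) : ℝ :=
  H (A ∪ C) + H (B ∪ C) - H (A ∪ B ∪ C) - H C

theorem sum_mul_sub_sum_mul_erase (H : Finset α → ℝ) (S : ι → Finset α) (γ : ι → ℝ) (a : α) :
    (∑ k, γ k * H (S k)) - ∑ k, γ k * H ((S k).erase a) =
      ∑ k ∈ univ.filter (fun k => a ∈ S k), γ k * (H (S k) - H ((S k).erase a)) := by
  rw [sum_filter, ← sum_sub_distrib]
  refine sum_congr rfl fun k _ => ?_
  split_ifs with ha
  · ring
  · rw [erase_eq_of_notMem ha, sub_self]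

variable [Fintype α]

theorem univ_erase_inter (a : α) (s : Finset α) : univ.erase a ∩ s = s.erase a := by
  rw [erase_inter, univ_inter]

theorem condMutualInfo_singleton_erase {H : Finset α → ℝ} {a : α} {s : Finset α} (ha : a ∈ s) :
    condMutualInfo H {a} (univ.erase a \ s) (univ.erase a ∩ s) =
      (H s - H (s.erase a)) + (H (univ.erase a) - H univ) := by
  have hs : {a} ∪ (univ.erase a ∩ s) = s := by
    rw [univ_erase_inter, ← insert_eq, insert_erase ha]
  have hrest : univ.erase a \ s ∪ univ.erase a ∩ s = univ.erase a := sdiff_union_inter _ _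
  have huniv : {a} ∪ univ.erase a \ s ∪ univ.erase a ∩ s = univ := by
    rw [union_assoc, hrest, ← insert_eq, insert_erase (mem_univ a)]
  rw [condMutualInfo, hs, hrest, huniv, univ_erase_inter]
  ring

theorem sum_mul_sub_eq_sum_mul_erase_add_sum_condMutualInfo (H : Finset α → ℝ)
    (S : ι → Finset α) (γ : ι → ℝ) (a : α)
    (hfrac : ∑ k ∈ univ.filter (fun k => a ∈ S k), γ k = 1) :
    (∑ k, γ k * H (S k)) - H univ =
      ((∑ k, γ k * H ((S k).erase a)) - H (univ.erase a)) +
        ∑ k ∈ univ.filter (fun k => a ∈ S k),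
          γ k * condMutualInfo H {a} (univ.erase a \ S k) (univ.erase a ∩ S k) := by
  have hsplit : ∑ k ∈ univ.filter (fun k => a ∈ S k),
        γ k * condMutualInfo H {a} (univ.erase a \ S k) (univ.erase a ∩ S k) =
      (∑ k ∈ univ.filter (fun k => a ∈ S k), γ k * (H (S k) - H ((S k).erase a))) +
        (∑ k ∈ univ.filter (fun k => a ∈ S k), γ k) * (H (univ.erase a) - H univ) := by
    rw [sum_mul, ← sum_add_distrib]
    refine sum_congr rfl fun k hk => ?_
    rw [condMutualInfo_singleton_erase (mem_filter.mp hk).2]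
    ring
  rw [hsplit, hfrac, ← sum_mul_sub_sum_mul_erase]
  ring

end Finset

theorem stmt_17 (n : ℕ)
    (𝒳 : Fin n → Type) [∀ i, Fintype (𝒳 i)]
    (p : (∀ i, 𝒳 i) → ℝ)
    (ι : Type) [Fintype ι] (S : ι → Finset (Fin n)) (γ : ι → ℝ)
    (hfrac : ∀ i : Fin n, ∑ k ∈ Finset.univ.filter (fun k => i ∈ S k), γ k = 1)
    (ln : Fin n) :
    (∑ k : ι, γ k * Hent p (S k)) - Hent p Finset.univ =
      ((∑ k : ι, γ k * Hent p ((S k).erase ln)) - Hent p (Finset.univ.erase ln)) +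
      ∑ k ∈ Finset.univ.filter (fun k => ln ∈ S k), γ k *
        (Hent p ({ln} ∪ ((Finset.univ.erase ln) ∩ S k)) +
          Hent p (((Finset.univ.erase ln) \ S k) ∪ ((Finset.univ.erase ln) ∩ S k)) -
          Hent p ({ln} ∪ ((Finset.univ.erase ln) \ S k) ∪ ((Finset.univ.erase ln) ∩ S k)) -
          Hent p ((Finset.univ.erase ln) ∩ S k)) :=
  sum_mul_sub_eq_sum_mul_erase_add_sum_condMutualInfo (Hent p) S γ ln (hfrac ln)
end

section
/- Let X_1, …, X_n (n ≥ 2) be jointly distributed random variables on finite alphabets, and let γ be a fractional partition with respect to a family 𝓕 of subsets of [n] satisfying the standing assumptions. Define the truncated family 𝓕̃ = {F ∩ [n−1] : F ∈ 𝓕} (with multiplicity) and the weights γ̃(F ∩ [n−1]) = γ(F). Then (𝓕̃, γ̃)-MI(X_1; …; X_{n−1}) ≤ (𝓕, γ)-MI(X_1; …; X_n) ≤ (𝓕̃, γ̃)-MI(X_1; …; X_{n−1}) + I(X_n ; X_{[n−1]}). -/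
/-
Entropy is submodular: `H(C ∪ D) + H(C ∩ D) ≤ H(C) + H(D)`, by Gibbs' inequality `log x ≤ x - 1`
applied against the measure `p_C p_D / p_{C ∩ D}` on configurations of `C ∪ D`, whose total mass is
at most one. Submodularity makes the increment `H(S) - H(S \ {ℓ})` antitone in `S ∋ ℓ`, so for every
member `S` of `𝓕` containing the last index `ℓ` it lies between `H([n]) - H([n - 1])` and `H(X_ℓ)`;
members not containing `ℓ` have increment zero. The difference of the two mutual informations is
`∑ γ(S) (H(S) - H(S \ {ℓ})) - (H([n]) - H([n - 1]))`, and since the weights of the members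
containing `ℓ` sum to one, it lies between `0` and `H(X_ℓ) - H([n]) + H([n - 1]) = I(X_ℓ ; X_{[n-1]})`.
-/

open Finset
open scoped Classical BigOperators

open Real Function

section FiberMass

variable {Ω α β : Type*} [Fintype Ω] [DecidableEq α] [DecidableEq β] (p : Ω → ℝ)

noncomputable def fiberMass (f : Ω → α) (y : α) : ℝ :=
  ∑ x ∈ univ.filter (f · = y), p x

variable {p}

lemma fiberMass_nonneg (hp : ∀ x, 0 ≤ p x) (f : Ω → α) (y : α) : 0 ≤ fiberMass p f y :=
  sum_nonneg fun x _ => hp x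

lemma sum_fiberMass [Fintype α] (f : Ω → α) : ∑ y, fiberMass p f y = ∑ x, p x :=
  sum_fiberwise univ f p

lemma fiberMass_comp [Fintype α] (g : α → β) (f : Ω → α) (y : β) :
    fiberMass p (g ∘ f) y = ∑ z ∈ univ.filter (g · = y), fiberMass p f z := by
  rw [fiberMass, ← sum_fiberwise_of_maps_to (g := f) (t := univ.filter (g · = y)) (by simp)]
  refine sum_congr rfl fun z hz => ?_
  rw [fiberMass, filter_filter]
  congr 1
  ext x
  simp only [mem_filter, mem_univ, true_and] at hz ⊢
  exact ⟨And.right, fun hx => ⟨by rw [comp_apply, hx]; exact hz, hx⟩⟩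

lemma sum_fiberMass_mul_comp [Fintype α] [Fintype β] (f : Ω → α) (g : α → β) (φ : β → ℝ) :
    ∑ z, fiberMass p f z * φ (g z) = ∑ y, fiberMass p (g ∘ f) y * φ y := by
  rw [← sum_fiberwise univ g]
  refine sum_congr rfl fun y _ => ?_
  rw [fiberMass_comp, sum_mul]
  exact sum_congr rfl fun z hz => by rw [(mem_filter.1 hz).2]

lemma fiberMass_le_fiberMass_comp (hp : ∀ x, 0 ≤ p x) (f : Ω → α) (g : α → β) (z : α) :
    fiberMass p f z ≤ fiberMass p (g ∘ f) (g z) :=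
  sum_le_sum_of_subset_of_nonneg (monotone_filter_right _ fun _ _ => congrArg g)
    fun x _ _ => hp x

end FiberMass

lemma Finset.restrict₂_union_pair_injective {ι : Type*} [DecidableEq ι] {X : ι → Type*}
    {C D : Finset ι} :
    Injective fun z : (i : ↥(C ∪ D)) → X i =>
      (restrict₂ subset_union_left z, restrict₂ subset_union_right z) := by
  intro z z' h
  obtain ⟨hC, hD⟩ := Prod.ext_iff.1 h
  funext ⟨i, hi⟩
  rcases mem_union.1 hi with hi | hi
  · exact congrFun hC ⟨i, hi⟩
  · exact congrFun hD ⟨i, hi⟩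

lemma sub_mul_div_le_mul_log {a c d e : ℝ} (ha : 0 ≤ a) (hac : a ≤ c) (had : a ≤ d) (hae : a ≤ e) :
    a - c * d / e ≤ a * (log a + log e - log c - log d) := by
  rcases ha.eq_or_lt with rfl | ha
  · have : 0 ≤ c * d / e := by positivity
    simpa using this
  have hc := ha.trans_le hac
  have hd := ha.trans_le had
  have he := ha.trans_le hae
  have hb : 0 < c * d / e / a := by positivity
  have hlog : log a + log e - log c - log d = -log (c * d / e / a) := by
    rw [log_div (by positivity) ha.ne', log_div (by positivity) he.ne', log_mul hc.ne' hd.ne']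
    ring
  calc a - c * d / e = -(a * (c * d / e / a - 1)) := by field_simp; ring
    _ ≤ -(a * log (c * d / e / a)) := by gcongr; exact log_le_sub_one_of_pos hb
    _ = a * (log a + log e - log c - log d) := by rw [hlog]; ring

section Entropy

variable {n : ℕ} {𝒳 : Fin n → Type} [∀ i, Fintype (𝒳 i)] {p : (∀ i, 𝒳 i) → ℝ}

lemma Hent_eq_sum_negMulLog_fiberMass (F : Finset (Fin n)) :
    Hent p F = ∑ y, negMulLog (fiberMass p F.restrict y) := by
  refine sum_congr rfl fun y _ => congrArg _ (sum_congr ?_ fun _ _ => rfl)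
  ext x
  simp [funext_iff]

lemma Hent_eq_neg_sum_mul_log (F : Finset (Fin n)) :
    Hent p F = -∑ y, fiberMass p F.restrict y * log (fiberMass p F.restrict y) := by
  simp [Hent_eq_sum_negMulLog_fiberMass, negMulLog]

lemma Hent_eq_neg_sum_mul_log_restrict₂ {A B : Finset (Fin n)} (h : A ⊆ B) :
    Hent p A = -∑ z, fiberMass p B.restrict z * log (fiberMass p A.restrict (restrict₂ h z)) := by
  rw [Hent_eq_neg_sum_mul_log,
    sum_fiberMass_mul_comp B.restrict (restrict₂ h) fun y => log (fiberMass p A.restrict y)]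
  rfl

lemma Hent_empty (hp : ∑ x, p x = 1) : Hent p ∅ = 0 := by
  rw [Hent_eq_sum_negMulLog_fiberMass]
  refine sum_eq_zero fun y _ => ?_
  rw [fiberMass, filter_true_of_mem fun x _ => Subsingleton.elim _ _, hp, negMulLog_one]

lemma sum_fiber_mul_le_sq (hp : ∀ x, 0 ≤ p x) (C D : Finset (Fin n)) (w : (i : ↥(C ∩ D)) → 𝒳 i) :
    ∑ z ∈ univ.filter (restrict₂ inter_subset_union · = w),
        fiberMass p C.restrict (restrict₂ subset_union_left z) *
          fiberMass p D.restrict (restrict₂ subset_union_right z) ≤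
      fiberMass p (C ∩ D).restrict w ^ 2 := by
  have hC : fiberMass p (C ∩ D).restrict w =
      ∑ y ∈ univ.filter (restrict₂ inter_subset_left · = w), fiberMass p C.restrict y :=
    fiberMass_comp (restrict₂ inter_subset_left) C.restrict w
  have hD : fiberMass p (C ∩ D).restrict w =
      ∑ y ∈ univ.filter (restrict₂ inter_subset_right · = w), fiberMass p D.restrict y :=
    fiberMass_comp (restrict₂ inter_subset_right) D.restrict w
  rw [sq]
  nth_rw 1 [hC]
  rw [hD, sum_mul_sum, ← sum_product']
  refine (sum_image restrict₂_union_pair_injective.injOn).symm.trans_le <|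
    sum_le_sum_of_subset_of_nonneg ?_ fun q _ _ =>
      mul_nonneg (fiberMass_nonneg hp _ q.1) (fiberMass_nonneg hp _ q.2)
  intro q hq
  obtain ⟨z, hz, rfl⟩ := mem_image.1 hq
  simp only [mem_filter, mem_univ, true_and, mem_product] at hz ⊢
  exact ⟨hz, hz⟩

-- Terms with `p_{C ∩ D} = 0` vanish, as `x / 0 = 0`.
lemma sum_fiberMass_mul_div_le_sum (hp : ∀ x, 0 ≤ p x) (C D : Finset (Fin n)) :
    ∑ z : (i : ↥(C ∪ D)) → 𝒳 i,
        fiberMass p C.restrict (restrict₂ subset_union_left z) *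
          fiberMass p D.restrict (restrict₂ subset_union_right z) /
          fiberMass p (C ∩ D).restrict (restrict₂ inter_subset_union z) ≤
      ∑ x, p x := by
  rw [← sum_fiberwise univ (restrict₂ inter_subset_union), ← sum_fiberMass (C ∩ D).restrict]
  refine sum_le_sum fun w _ => ?_
  calc _ = (∑ z ∈ univ.filter (restrict₂ inter_subset_union · = w),
          fiberMass p C.restrict (restrict₂ subset_union_left z) *
            fiberMass p D.restrict (restrict₂ subset_union_right z)) /
          fiberMass p (C ∩ D).restrict w := by
        rw [sum_div]
        exact sum_congr rfl fun z hz => by rw [(mem_filter.1 hz).2]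
    _ ≤ fiberMass p (C ∩ D).restrict w ^ 2 / fiberMass p (C ∩ D).restrict w :=
        div_le_div_of_nonneg_right (sum_fiber_mul_le_sq hp C D w) (fiberMass_nonneg hp _ _)
    _ = fiberMass p (C ∩ D).restrict w := by rw [sq, mul_self_div_self]

theorem Hent_union_add_Hent_inter_le (hp : ∀ x, 0 ≤ p x) (C D : Finset (Fin n)) :
    Hent p (C ∪ D) + Hent p (C ∩ D) ≤ Hent p C + Hent p D := by
  rw [Hent_eq_neg_sum_mul_log, Hent_eq_neg_sum_mul_log_restrict₂ (B := C ∪ D) inter_subset_union,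
    Hent_eq_neg_sum_mul_log_restrict₂ (B := C ∪ D) subset_union_left,
    Hent_eq_neg_sum_mul_log_restrict₂ (B := C ∪ D) subset_union_right]
  set a := fiberMass p (C ∪ D).restrict
  set c := fun z => fiberMass p C.restrict (restrict₂ subset_union_left z)
  set d := fun z => fiberMass p D.restrict (restrict₂ subset_union_right z)
  set e := fun z => fiberMass p (C ∩ D).restrict (restrict₂ inter_subset_union z)
  have gibbs : ∑ z, (a z - c z * d z / e z) ≤
      ∑ z, a z * (log (a z) + log (e z) - log (c z) - log (d z)) :=
    sum_le_sum fun z _ => sub_mul_div_le_mul_log (fiberMass_nonneg hp _ _)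
      (fiberMass_le_fiberMass_comp hp _ (restrict₂ subset_union_left) z)
      (fiberMass_le_fiberMass_comp hp _ (restrict₂ subset_union_right) z)
      (fiberMass_le_fiberMass_comp hp _ (restrict₂ inter_subset_union) z)
  have hsum_a : ∑ z, a z = ∑ x, p x := sum_fiberMass _
  have hsum_b : ∑ z, c z * d z / e z ≤ ∑ x, p x := sum_fiberMass_mul_div_le_sum hp C D
  simp only [sum_sub_distrib, mul_sub, mul_add, sum_add_distrib] at gibbs
  linarith

lemma Hent_sub_Hent_erase_le_of_subset (hp : ∀ x, 0 ≤ p x) {i : Fin n} {S T : Finset (Fin n)}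
    (hi : i ∈ S) (hST : S ⊆ T) :
    Hent p T - Hent p (T.erase i) ≤ Hent p S - Hent p (S.erase i) := by
  have hunion : S ∪ T.erase i = T := by
    ext j
    by_cases hj : j = i
    · simp [hj, hi, hST hi]
    · simpa [hj] using fun h => hST h
  have hinter : S ∩ T.erase i = S.erase i := by
    ext j
    simp only [mem_inter, mem_erase]
    exact ⟨fun h => ⟨h.2.1, h.1⟩, fun h => ⟨h.2, h.1, hST h.2⟩⟩
  have := Hent_union_add_Hent_inter_le hp S (T.erase i)
  rw [hunion, hinter] at this
  linarith

end Entropy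

lemma le_sum_mul_of_forall_le {ι : Type*} {s : Finset ι} {w f : ι → ℝ} {c : ℝ}
    (hw : ∀ k ∈ s, 0 ≤ w k) (hs : ∑ k ∈ s, w k = 1) (hf : ∀ k ∈ s, c ≤ f k) :
    c ≤ ∑ k ∈ s, w k * f k :=
  calc c = ∑ k ∈ s, w k * c := by rw [← sum_mul, hs, one_mul]
    _ ≤ ∑ k ∈ s, w k * f k := sum_le_sum fun k hk => mul_le_mul_of_nonneg_left (hf k hk) (hw k hk)

lemma sum_mul_le_of_forall_le {ι : Type*} {s : Finset ι} {w f : ι → ℝ} {c : ℝ}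
    (hw : ∀ k ∈ s, 0 ≤ w k) (hs : ∑ k ∈ s, w k = 1) (hf : ∀ k ∈ s, f k ≤ c) :
    ∑ k ∈ s, w k * f k ≤ c :=
  calc ∑ k ∈ s, w k * f k ≤ ∑ k ∈ s, w k * c :=
        sum_le_sum fun k hk => mul_le_mul_of_nonneg_left (hf k hk) (hw k hk)
    _ = c := by rw [← sum_mul, hs, one_mul]

theorem stmt_18 (n : ℕ)
    (𝒳 : Fin n → Type) [∀ i, Fintype (𝒳 i)]
    (p : (∀ i, 𝒳 i) → ℝ)
    (hp0 : ∀ x, 0 ≤ p x) (hp1 : ∑ x : ∀ i, 𝒳 i, p x = 1)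
    (ι : Type) [Fintype ι] (S : ι → Finset (Fin n)) (γ : ι → ℝ)
    (hpos : ∀ k, 0 < γ k)
    (hfrac : ∀ i : Fin n, ∑ k ∈ Finset.univ.filter (fun k => i ∈ S k), γ k = 1)
    (ln : Fin n) :
    ((∑ k : ι, γ k * Hent p ((S k).erase ln)) - Hent p (Finset.univ.erase ln) ≤
        (∑ k : ι, γ k * Hent p (S k)) - Hent p Finset.univ) ∧
    ((∑ k : ι, γ k * Hent p (S k)) - Hent p Finset.univ ≤
        ((∑ k : ι, γ k * Hent p ((S k).erase ln)) - Hent p (Finset.univ.erase ln)) +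
        (Hent p {ln} + Hent p (Finset.univ.erase ln) - Hent p Finset.univ)) := by
  set K := univ.filter fun k => ln ∈ S k
  have hdiff : ∑ k, γ k * Hent p (S k) - ∑ k, γ k * Hent p ((S k).erase ln) =
      ∑ k ∈ K, γ k * (Hent p (S k) - Hent p ((S k).erase ln)) := by
    rw [← sum_sub_distrib, sum_filter_of_ne]
    · simp only [mul_sub]
    · intro k _ hk
      by_contra hln
      simp [erase_eq_of_notMem hln] at hk
  have hγ : ∀ k ∈ K, 0 ≤ γ k := fun k _ => (hpos k).le
  have hlower : ∀ k ∈ K, Hent p univ - Hent p (univ.erase ln) ≤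
      Hent p (S k) - Hent p ((S k).erase ln) := fun k hk =>
    Hent_sub_Hent_erase_le_of_subset hp0 (mem_filter.1 hk).2 (subset_univ _)
  have hupper : ∀ k ∈ K, Hent p (S k) - Hent p ((S k).erase ln) ≤ Hent p {ln} := fun k hk => by
    simpa [Hent_empty hp1] using Hent_sub_Hent_erase_le_of_subset hp0 (mem_singleton_self ln)
      (singleton_subset_iff.2 (mem_filter.1 hk).2)
  constructor
  · linarith [le_sum_mul_of_forall_le hγ (hfrac ln) hlower]
  · linarith [sum_mul_le_of_forall_le hγ (hfrac ln) hupper]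
end

section
/- Let K be a positive definite real n × n matrix (n ≥ 2), and let γ be a fractional partition with respect to a family 𝓕 of subsets of [n] satisfying the standing assumptions. For F ⊆ [n] let K(F) denote the principal submatrix of K with rows and columns indexed by F. Then ∏_{F ∈ 𝓕} |K(F)|^{γ(F)} = |K| (where |M| denotes the determinant and the powers are real powers of the positive numbers |K(F)|) if and only if K is a diagonal matrix, i.e., K_{ij} = 0 for all i ≠ j. -/
open Finset
open scoped Classical BigOperators

section
open Matrix

namespace S19

variable {n : ℕ}

noncomputable def sd (K : Matrix (Fin n) (Fin n) ℝ) (S : Finset (Fin n)) : ℝ :=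
  (K.submatrix (fun i : {i // i ∈ S} => (i : Fin n)) (fun i : {i // i ∈ S} => (i : Fin n))).det

lemma symm_apply {K : Matrix (Fin n) (Fin n) ℝ} (hK : K.PosDef) (i j : Fin n) :
    K i j = K j i := by simpa using hK.1.apply j i

lemma posdef_sub {m : Type} [Fintype m] {K : Matrix (Fin n) (Fin n) ℝ}
    (hK : K.PosDef) (f : m → Fin n) (hf : Function.Injective f) :
    (K.submatrix f f).PosDef := by
  rw [Matrix.posDef_iff_dotProduct_mulVec]
  constructor
  · show (K.submatrix f f)ᴴ = _
    ext a b
    simp only [Matrix.conjTranspose_apply, Matrix.submatrix_apply, star_trivial]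
    exact symm_apply hK (f b) (f a)
  · intro x hx
    classical
    set y : Fin n → ℝ := fun i => if h : i ∈ Set.range f then x h.choose else 0 with hy
    have hyf : ∀ a, y (f a) = x a := by
      intro a
      have h : f a ∈ Set.range f := ⟨a, rfl⟩
      have := h.choose_spec
      simp only [hy, dif_pos h]
      rw [hf this]
    have hy0 : ∀ i, i ∉ Set.range f → y i = 0 := fun i hi => dif_neg hi
    have hinj : ∀ a ∈ Finset.univ (α := m), ∀ b ∈ Finset.univ (α := m), f a = f b → a = b :=
      fun a _ b _ h => hf h
    have hnotim : ∀ i, i ∉ Finset.univ.image f → y i = 0 := by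
      intro i hi
      apply hy0
      rintro ⟨a, rfl⟩; exact hi (Finset.mem_image_of_mem f (Finset.mem_univ a))
    have hyne : y ≠ 0 := by
      intro h0
      apply hx
      funext a
      have := congrFun h0 (f a)
      simpa [hyf a] using this
    have inner : ∀ i, (K *ᵥ y) i = ∑ a : m, K i (f a) * x a := by
      intro i
      show (∑ j, K i j * y j) = _
      calc ∑ j, K i j * y j = ∑ j ∈ Finset.univ.image f, K i j * y j :=
            (Finset.sum_subset (Finset.subset_univ _)
              (fun j _ hj => by rw [hnotim j hj, mul_zero])).symm
        _ = ∑ a : m, K i (f a) * y (f a) := Finset.sum_image hinj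
        _ = ∑ a : m, K i (f a) * x a := by simp only [hyf]
    have key : (star x) ⬝ᵥ ((K.submatrix f f) *ᵥ x) = (star y) ⬝ᵥ (K *ᵥ y) := by
      simp only [star_trivial, dotProduct]
      calc ∑ a : m, x a * ((K.submatrix f f) *ᵥ x) a
          = ∑ a : m, y (f a) * (K *ᵥ y) (f a) := by
            apply Finset.sum_congr rfl
            intro a _
            rw [hyf a, inner (f a)]
            simp [Matrix.mulVec, dotProduct, Matrix.submatrix_apply]
        _ = ∑ j ∈ Finset.univ.image f, y j * (K *ᵥ y) j := (Finset.sum_image (f := fun j => y j * (K *ᵥ y) j) hinj).symm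
        _ = ∑ j, y j * (K *ᵥ y) j :=
            Finset.sum_subset (Finset.subset_univ _)
              (fun j _ hj => by rw [hnotim j hj, zero_mul])
    rw [key]
    exact hK.dotProduct_mulVec_pos hyne

lemma sd_pos {K : Matrix (Fin n) (Fin n) ℝ} (hK : K.PosDef) (S : Finset (Fin n)) :
    0 < sd K S :=
  (posdef_sub hK _ (fun a b h => Subtype.ext h)).det_pos


lemma exists_min {K : Matrix (Fin n) (Fin n) ℝ} (hK : K.PosDef)
    (l : Fin n) (S : Finset (Fin n)) (hl : l ∉ S) :
    ∃ x : Fin n → ℝ, (∀ j, j ∉ S → x j = 0) ∧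
      (∀ j ∈ S, (K *ᵥ (Pi.single l 1 + x)) j = 0) ∧
      sd K (insert l S) = ((Pi.single l 1 + x) ⬝ᵥ (K *ᵥ (Pi.single l 1 + x))) * sd K S := by
  classical
  set A : Matrix {i // i ∈ S} {i // i ∈ S} ℝ :=
    K.submatrix (fun i : {i // i ∈ S} => (i : Fin n)) (fun i => (i : Fin n)) with hA
  have hApd : A.PosDef := posdef_sub hK _ (fun a b h => Subtype.ext h)
  haveI : Invertible A := A.invertibleOfIsUnitDet hApd.det_pos.ne'.isUnit
  set w : {i // i ∈ S} → ℝ := fun s => K s l with hw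
  set yv : {i // i ∈ S} → ℝ := fun s => -((⅟A *ᵥ w) s) with hyv
  set x : Fin n → ℝ := fun j => if h : j ∈ S then yv ⟨j, h⟩ else 0 with hx
  have hx0 : ∀ j, j ∉ S → x j = 0 := fun j hj => dif_neg hj
  have hxl : x l = 0 := hx0 l hl
  have hxv : ∀ s : {i // i ∈ S}, x ↑s = yv s := by
    intro s
    rw [hx]
    simp only [s.2, dif_pos]
  have hKx : ∀ j, (K *ᵥ x) j = ∑ s : {i // i ∈ S}, K j ↑s * yv s := by
    intro j
    show (∑ m, K j m * x m) = _
    calc (∑ m, K j m * x m) = ∑ m ∈ S, K j m * x m :=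
          (Finset.sum_subset (Finset.subset_univ _)
            (fun m _ hm => by rw [hx0 m hm, mul_zero])).symm
      _ = ∑ s : {i // i ∈ S}, K j ↑s * x ↑s :=
          (Finset.sum_coe_sort S (fun m => K j m * x m)).symm
      _ = ∑ s : {i // i ∈ S}, K j ↑s * yv s := by
          exact Finset.sum_congr rfl (fun s _ => by rw [hxv s])
  have hAyv : A *ᵥ yv = -w := by
    rw [hyv]
    show A *ᵥ (-(⅟A *ᵥ w)) = -w
    rw [Matrix.mulVec_neg, Matrix.mulVec_mulVec, mul_invOf_self, Matrix.one_mulVec]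
  have hKu : ∀ j ∈ S, (K *ᵥ (Pi.single l 1 + x)) j = 0 := by
    intro j hj
    rw [Matrix.mulVec_add, Pi.add_apply, Matrix.mulVec_single, hKx j]
    have h1 : (∑ s : {i // i ∈ S}, K j ↑s * yv s) = (A *ᵥ yv) ⟨j, hj⟩ := rfl
    rw [h1, hAyv]
    show K j l * 1 + (-(w ⟨j, hj⟩)) = 0
    rw [hw]
    ring
  refine ⟨x, hx0, hKu, ?_⟩
  -- the quadratic form value
  set u : Fin n → ℝ := Pi.single l 1 + x with hu
  have hul : u l = 1 := by rw [hu]; simp [hxl]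
  have hq : u ⬝ᵥ (K *ᵥ u) = (K *ᵥ u) l := by
    show (∑ j, u j * (K *ᵥ u) j) = _
    rw [Finset.sum_eq_single l]
    · rw [hul, one_mul]
    · intro j _ hjl
      by_cases hjS : j ∈ S
      · rw [hKu j hjS, mul_zero]
      · have : u j = 0 := by rw [hu]; simp [Pi.single_eq_of_ne hjl, hx0 j hjS]
        rw [this, zero_mul]
    · intro h; exact absurd (Finset.mem_univ l) h
  have hql : (K *ᵥ u) l = K l l - ∑ t : {i // i ∈ S}, (∑ s : {i // i ∈ S}, K l ↑s * ⅟A s t) * w t := by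
    rw [hu, Matrix.mulVec_add, Pi.add_apply, Matrix.mulVec_single_one, Matrix.col_apply, hKx l]
    have hyvs : ∀ s : {i // i ∈ S}, K l ↑s * yv s
        = -(∑ t : {i // i ∈ S}, K l ↑s * (⅟A s t * w t)) := by
      intro s
      have h1 : yv s = -(∑ t : {i // i ∈ S}, ⅟A s t * w t) := by
        simp [hyv, Matrix.mulVec, dotProduct]
      rw [h1, mul_neg, Finset.mul_sum]
    have hdd : ∀ t : {i // i ∈ S}, (∑ s : {i // i ∈ S}, K l ↑s * ⅟A s t) * w t
        = ∑ s : {i // i ∈ S}, K l ↑s * (⅟A s t * w t) := by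
      intro t; rw [Finset.sum_mul]; exact Finset.sum_congr rfl (fun s _ => by ring)
    simp only [hyvs, hdd, Finset.sum_neg_distrib]
    rw [Finset.sum_comm]
    ring
  -- equivalence and block determinant
  have hlS : ∀ s : {i // i ∈ S}, (s : Fin n) ≠ l := fun s h => hl (h ▸ s.2)
  set f : ({i // i ∈ S} ⊕ Unit) → {i // i ∈ insert l S} :=
    Sum.elim (fun s => ⟨↑s, Finset.mem_insert_of_mem s.2⟩)
      (fun _ => ⟨l, Finset.mem_insert_self l S⟩) with hf
  have hbij : Function.Bijective f := by
    constructor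
    · rintro (s | u1) (t | u2) hab <;> simp only [hf, Sum.elim_inl, Sum.elim_inr,
        Subtype.mk.injEq] at hab
      · rw [Subtype.ext hab]
      · exact absurd hab (hlS s)
      · exact absurd hab.symm (hlS t)
      · rfl
    · rintro ⟨z, hz⟩
      rcases Finset.mem_insert.mp hz with h | h
      · exact ⟨Sum.inr (), by simp [hf, h]⟩
      · exact ⟨Sum.inl ⟨z, h⟩, rfl⟩
  set e : ({i // i ∈ S} ⊕ Unit) ≃ {i // i ∈ insert l S} := Equiv.ofBijective f hbij with he
  set B : Matrix {i // i ∈ S} Unit ℝ := Matrix.of fun s _ => w s with hB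
  set C : Matrix Unit {i // i ∈ S} ℝ := Matrix.of fun _ s => K l ↑s with hC
  set D : Matrix Unit Unit ℝ := Matrix.of fun _ _ => K l l with hD
  have hsub : ((K.submatrix (fun i : {i // i ∈ insert l S} => (i : Fin n))
      (fun i : {i // i ∈ insert l S} => (i : Fin n))).submatrix e e)
      = Matrix.fromBlocks A B C D := by
    ext a b
    rcases a with s | u1 <;> rcases b with t | u2 <;> rfl
  have hdet : sd K (insert l S) = A.det * (D - C * ⅟A * B).det := by
    rw [sd, ← Matrix.det_submatrix_equiv_self e, hsub, Matrix.det_fromBlocks₁₁]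
  have hscal : (D - C * ⅟A * B).det = K l l - ∑ t : {i // i ∈ S}, (∑ s : {i // i ∈ S}, K l ↑s * ⅟A s t) * w t := by
    rw [Matrix.det_unique]
    simp only [Matrix.sub_apply, Matrix.of_apply, Matrix.mul_apply]
    congr 1
  have hsdS : sd K S = A.det := rfl
  rw [hdet, hscal, hsdS, ← hql, ← hq]
  ring


lemma dot_comm {K : Matrix (Fin n) (Fin n) ℝ} (hK : K.PosDef) (v w : Fin n → ℝ) :
    v ⬝ᵥ (K *ᵥ w) = w ⬝ᵥ (K *ᵥ v) := by
  simp only [dotProduct, Matrix.mulVec, Finset.mul_sum]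
  rw [Finset.sum_comm]
  apply Finset.sum_congr rfl
  intro i _
  apply Finset.sum_congr rfl
  intro j _
  rw [symm_apply hK i j]
  ring

lemma dot_expand {K : Matrix (Fin n) (Fin n) ℝ} (hK : K.PosDef) (u d : Fin n → ℝ) :
    (u + d) ⬝ᵥ (K *ᵥ (u + d)) = u ⬝ᵥ (K *ᵥ u) + 2 * (d ⬝ᵥ (K *ᵥ u)) + d ⬝ᵥ (K *ᵥ d) := by
  rw [Matrix.mulVec_add, dotProduct_add, add_dotProduct, add_dotProduct,
    dot_comm hK u d]
  ring

lemma expand_q {K : Matrix (Fin n) (Fin n) ℝ} (hK : K.PosDef) (l : Fin n) (S : Finset (Fin n))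
    (x z : Fin n → ℝ) (hx0 : ∀ j, j ∉ S → x j = 0)
    (hxK : ∀ j ∈ S, (K *ᵥ (Pi.single l 1 + x)) j = 0)
    (hz0 : ∀ j, j ∉ S → z j = 0) :
    (Pi.single l 1 + z) ⬝ᵥ (K *ᵥ (Pi.single l 1 + z)) =
      (Pi.single l 1 + x) ⬝ᵥ (K *ᵥ (Pi.single l 1 + x)) + (z - x) ⬝ᵥ (K *ᵥ (z - x)) := by
  have hds : Pi.single l 1 + z = (Pi.single l 1 + x) + (z - x) := by
    funext j; simp only [Pi.add_apply, Pi.sub_apply]; ring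
  have hdKu : (z - x) ⬝ᵥ (K *ᵥ (Pi.single l 1 + x)) = 0 := by
    apply Finset.sum_eq_zero
    intro j _
    by_cases hj : j ∈ S
    · rw [hxK j hj, mul_zero]
    · have : (z - x) j = 0 := by simp [hx0 j hj, hz0 j hj]
      rw [this, zero_mul]
  rw [hds, dot_expand hK, hdKu]
  ring

noncomputable def cv (K : Matrix (Fin n) (Fin n) ℝ) (l : Fin n) (S : Finset (Fin n)) : ℝ :=
  sd K (insert l S) / sd K S

lemma cv_pos {K : Matrix (Fin n) (Fin n) ℝ} (hK : K.PosDef) (l : Fin n) (S : Finset (Fin n)) :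
    0 < cv K l S := div_pos (sd_pos hK _) (sd_pos hK _)

lemma cv_eq_q {K : Matrix (Fin n) (Fin n) ℝ} (hK : K.PosDef) (l : Fin n) (S : Finset (Fin n))
    (hl : l ∉ S) :
    ∃ x : Fin n → ℝ, (∀ j, j ∉ S → x j = 0) ∧
      (∀ j ∈ S, (K *ᵥ (Pi.single l 1 + x)) j = 0) ∧
      cv K l S = (Pi.single l 1 + x) ⬝ᵥ (K *ᵥ (Pi.single l 1 + x)) := by
  obtain ⟨x, h0, hk, hdet⟩ := exists_min hK l S hl
  exact ⟨x, h0, hk, by rw [cv, hdet, mul_div_assoc, div_self (sd_pos hK S).ne', mul_one]⟩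

lemma cv_mono {K : Matrix (Fin n) (Fin n) ℝ} (hK : K.PosDef) {A B : Finset (Fin n)}
    (hAB : A ⊆ B) {l : Fin n} (hl : l ∉ B) : cv K l B ≤ cv K l A := by
  obtain ⟨xB, hB0, hBK, hBq⟩ := cv_eq_q hK l B hl
  obtain ⟨xA, hA0, hAK, hAq⟩ := cv_eq_q hK l A (fun h => hl (hAB h))
  have hz0 : ∀ j, j ∉ B → xA j = 0 := fun j hj => hA0 j (fun h => hj (hAB h))
  have hexp := expand_q hK l B xB xA hB0 hBK hz0
  have hnn : 0 ≤ (xA - xB) ⬝ᵥ (K *ᵥ (xA - xB)) := by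
    have := hK.posSemidef.dotProduct_mulVec_nonneg (xA - xB)
    simpa using this
  rw [hAq, hBq]
  linarith [hexp]

lemma cv_eq_imp {K : Matrix (Fin n) (Fin n) ℝ} (hK : K.PosDef) {A B : Finset (Fin n)}
    (hAB : A ⊆ B) {l : Fin n} (hl : l ∉ B) (heq : cv K l A = cv K l B) :
    ∃ x : Fin n → ℝ, (∀ j, j ∉ A → x j = 0) ∧
      ∀ j ∈ B, (K *ᵥ (Pi.single l 1 + x)) j = 0 := by
  obtain ⟨xB, hB0, hBK, hBq⟩ := cv_eq_q hK l B hl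
  obtain ⟨xA, hA0, hAK, hAq⟩ := cv_eq_q hK l A (fun h => hl (hAB h))
  have hz0 : ∀ j, j ∉ B → xA j = 0 := fun j hj => hA0 j (fun h => hj (hAB h))
  have hexp := expand_q hK l B xB xA hB0 hBK hz0
  have hq0 : (xA - xB) ⬝ᵥ (K *ᵥ (xA - xB)) = 0 := by
    rw [← hAq, ← hBq, ← heq] at hexp
    linarith
  have hdz : xA = xB := by
    by_contra hne
    have h1 : xA - xB ≠ 0 := sub_ne_zero.mpr hne
    have := hK.dotProduct_mulVec_pos h1
    simp only [star_trivial] at this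
    exact absurd hq0 (ne_of_gt this)
  exact ⟨xA, hA0, by rw [hdz]; exact hBK⟩

lemma sd_empty (K : Matrix (Fin n) (Fin n) ℝ) : sd K (∅ : Finset (Fin n)) = 1 := by
  haveI : IsEmpty {i // i ∈ (∅ : Finset (Fin n))} := ⟨fun x => Finset.notMem_empty _ x.2⟩
  exact Matrix.det_isEmpty

lemma chain {K : Matrix (Fin n) (Fin n) ℝ} (hK : K.PosDef) (S : Finset (Fin n)) :
    sd K S = ∏ l ∈ S, cv K l (S ∩ Finset.Iio l) := by
  induction S using Finset.induction_on_max with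
  | empty => simp [sd_empty]
  | insert a s hmax ih =>
    have has : a ∉ s := fun h => lt_irrefl a (hmax a h)
    have h1 : (insert a s) ∩ Finset.Iio a = s := by
      ext x
      simp only [Finset.mem_inter, Finset.mem_insert, Finset.mem_Iio]
      constructor
      · rintro ⟨rfl | hx, hlt⟩
        · exact absurd hlt (lt_irrefl x)
        · exact hx
      · intro hx; exact ⟨Or.inr hx, hmax x hx⟩
    have h2 : ∀ l ∈ s, (insert a s) ∩ Finset.Iio l = s ∩ Finset.Iio l := by
      intro l hl
      ext x
      simp only [Finset.mem_inter, Finset.mem_insert, Finset.mem_Iio]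
      constructor
      · rintro ⟨rfl | hx, hlt⟩
        · exact absurd (hmax l hl) (not_lt.mpr hlt.le)
        · exact ⟨hx, hlt⟩
      · rintro ⟨hx, hlt⟩; exact ⟨Or.inr hx, hlt⟩
    rw [Finset.prod_insert has, h1,
      Finset.prod_congr rfl (fun l hl => by rw [h2 l hl]), ← ih, cv,
      div_mul_cancel₀ _ (sd_pos hK s).ne']

lemma sd_univ_eq {K : Matrix (Fin n) (Fin n) ℝ} : K.det = sd K Finset.univ := by
  have h : (K.submatrix (fun i : {i // i ∈ (Finset.univ : Finset (Fin n))} => (i : Fin n))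
      (fun i : {i // i ∈ (Finset.univ : Finset (Fin n))} => (i : Fin n)))
      = K.submatrix (Equiv.subtypeUnivEquiv (fun i : Fin n => Finset.mem_univ i))
          (Equiv.subtypeUnivEquiv (fun i : Fin n => Finset.mem_univ i)) := by ext a b; rfl
  rw [sd, h, Matrix.det_submatrix_equiv_self]

lemma key {K : Matrix (Fin n) (Fin n) ℝ} (hK : K.PosDef)
    {ι : Type} [Fintype ι] (F : ι → Finset (Fin n)) (γ : ι → ℝ)
    (hpos : ∀ k, 0 < γ k)
    (hfrac : ∀ i : Fin n, ∑ k ∈ Finset.univ.filter (fun k => i ∈ F k), γ k = 1)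
    (heq : (∏ k : ι, sd K (F k) ^ (γ k)) = K.det) :
    ∀ k, ∀ l ∈ F k, cv K l (F k ∩ Finset.Iio l) = cv K l (Finset.Iio l) := by
  classical
  have hIio : ∀ l : Fin n, l ∉ Finset.Iio l := fun l => by simp
  have hrpos : ∀ l, 0 < cv K l (Finset.Iio l) := fun l => cv_pos hK _ _
  have hcpos : ∀ l (S : Finset (Fin n)), 0 < cv K l S := fun l S => cv_pos hK _ _
  have hmono : ∀ (S : Finset (Fin n)) l, cv K l (Finset.Iio l) ≤ cv K l (S ∩ Finset.Iio l) :=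
    fun S l => cv_mono hK Finset.inter_subset_right (hIio l)
  have hlogsd : ∀ S : Finset (Fin n), Real.log (sd K S)
      = ∑ l ∈ S, Real.log (cv K l (S ∩ Finset.Iio l)) := by
    intro S
    rw [chain hK S, Real.log_prod]
    exact fun l _ => (hcpos l _).ne'
  have hlog_ge : ∀ S : Finset (Fin n), (∑ l ∈ S, Real.log (cv K l (Finset.Iio l)))
      ≤ Real.log (sd K S) := by
    intro S
    rw [hlogsd S]
    exact Finset.sum_le_sum (fun l _ => Real.log_le_log (hrpos l) (hmono S l))
  have hlhs : Real.log (∏ k : ι, sd K (F k) ^ (γ k)) = ∑ k, γ k * Real.log (sd K (F k)) := by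
    rw [Real.log_prod]
    · exact Finset.sum_congr rfl (fun k _ => Real.log_rpow (sd_pos hK _) _)
    · exact fun k _ => (Real.rpow_pos_of_pos (sd_pos hK _) _).ne'
  have huniv : Real.log (sd K Finset.univ) = ∑ l, Real.log (cv K l (Finset.Iio l)) := by
    rw [hlogsd]
    apply Finset.sum_congr rfl
    intro l _
    congr 2
    ext x
    simp
  have hswap : (∑ l, Real.log (cv K l (Finset.Iio l)))
      = ∑ k, γ k * ∑ l ∈ F k, Real.log (cv K l (Finset.Iio l)) := by
    calc (∑ l, Real.log (cv K l (Finset.Iio l)))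
        = ∑ l, (∑ k ∈ Finset.univ.filter (fun k => l ∈ F k), γ k)
            * Real.log (cv K l (Finset.Iio l)) :=
          Finset.sum_congr rfl (fun l _ => by rw [hfrac l, one_mul])
      _ = ∑ l : Fin n, ∑ k : ι,
            (if l ∈ F k then γ k * Real.log (cv K l (Finset.Iio l)) else 0) := by
          apply Finset.sum_congr rfl
          intro l _
          rw [Finset.sum_mul, Finset.sum_filter]
      _ = ∑ k : ι, ∑ l : Fin n,
            (if l ∈ F k then γ k * Real.log (cv K l (Finset.Iio l)) else 0) :=
          Finset.sum_comm
      _ = ∑ k, γ k * ∑ l ∈ F k, Real.log (cv K l (Finset.Iio l)) := by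
          apply Finset.sum_congr rfl
          intro k _
          rw [Finset.mul_sum, ← Finset.sum_filter]
          apply Finset.sum_congr _ (fun l _ => rfl)
          ext l
          simp
  have h0 : ∑ k, γ k * Real.log (sd K (F k))
      = ∑ k, γ k * ∑ l ∈ F k, Real.log (cv K l (Finset.Iio l)) := by
    rw [← hlhs, heq, sd_univ_eq, huniv, hswap]
  have hk0 : ∀ k, Real.log (sd K (F k)) = ∑ l ∈ F k, Real.log (cv K l (Finset.Iio l)) := by
    have hsz : ∑ k, γ k * (Real.log (sd K (F k))
        - ∑ l ∈ F k, Real.log (cv K l (Finset.Iio l))) = 0 := by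
      simp only [mul_sub]
      rw [Finset.sum_sub_distrib, h0, sub_self]
    have hz := (Finset.sum_eq_zero_iff_of_nonneg
      (fun k _ => mul_nonneg (hpos k).le (sub_nonneg.mpr (hlog_ge (F k))))).mp hsz
    intro k
    rcases mul_eq_zero.mp (hz k (Finset.mem_univ k)) with h | h
    · exact absurd h (hpos k).ne'
    · linarith [sub_eq_zero.mp h]
  intro k l hl
  have hsum0 : ∑ l ∈ F k, (Real.log (cv K l (F k ∩ Finset.Iio l))
      - Real.log (cv K l (Finset.Iio l))) = 0 := by
    rw [Finset.sum_sub_distrib, ← hlogsd (F k), hk0 k, sub_self]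
  have hterm := (Finset.sum_eq_zero_iff_of_nonneg
    (fun l _ => sub_nonneg.mpr (Real.log_le_log (hrpos l) (hmono (F k) l)))).mp hsum0 l hl
  have hlogeq : Real.log (cv K l (F k ∩ Finset.Iio l)) = Real.log (cv K l (Finset.Iio l)) := by
    linarith
  exact Real.log_injOn_pos (Set.mem_Ioi.mpr (hcpos l _)) (Set.mem_Ioi.mpr (hrpos l)) hlogeq

lemma swap_frac {ι : Type} [Fintype ι] (F : ι → Finset (Fin n)) (γ : ι → ℝ)
    (hfrac : ∀ i : Fin n, ∑ k ∈ Finset.univ.filter (fun k => i ∈ F k), γ k = 1)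
    (f : Fin n → ℝ) :
    (∑ l, f l) = ∑ k, γ k * ∑ l ∈ F k, f l := by
  classical
  calc (∑ l, f l)
      = ∑ l, (∑ k ∈ Finset.univ.filter (fun k => l ∈ F k), γ k) * f l :=
        Finset.sum_congr rfl (fun l _ => by rw [hfrac l, one_mul])
    _ = ∑ l : Fin n, ∑ k : ι, (if l ∈ F k then γ k * f l else 0) := by
        apply Finset.sum_congr rfl
        intro l _
        rw [Finset.sum_mul, Finset.sum_filter]
    _ = ∑ k : ι, ∑ l : Fin n, (if l ∈ F k then γ k * f l else 0) := Finset.sum_comm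
    _ = ∑ k, γ k * ∑ l ∈ F k, f l := by
        apply Finset.sum_congr rfl
        intro k _
        rw [Finset.mul_sum, ← Finset.sum_filter]
        apply Finset.sum_congr _ (fun l _ => rfl)
        ext l
        simp

lemma diag_entry_pos {K : Matrix (Fin n) (Fin n) ℝ} (hK : K.PosDef) (i : Fin n) :
    0 < K i i := by
  have h := hK.dotProduct_mulVec_pos (x := Pi.single i 1) (by
    intro h
    have := congrFun h i
    simp at this)
  have hval : (Pi.single i 1 : Fin n → ℝ) ⬝ᵥ (K *ᵥ Pi.single i 1) = K i i := by
    rw [Matrix.mulVec_single]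
    simp [dotProduct, Pi.single_apply, ite_mul]
  rw [star_trivial, hval] at h
  exact h

lemma sd_diag {K : Matrix (Fin n) (Fin n) ℝ} (hdiag : ∀ i j : Fin n, i ≠ j → K i j = 0)
    (S : Finset (Fin n)) : sd K S = ∏ i ∈ S, K i i := by
  have hsub : (K.submatrix (fun i : {i // i ∈ S} => (i : Fin n))
      (fun i : {i // i ∈ S} => (i : Fin n)))
      = Matrix.diagonal (fun s : {i // i ∈ S} => K s s) := by
    ext a b
    by_cases hab : a = b
    · subst hab; simp [Matrix.diagonal_apply_eq]
    · rw [Matrix.diagonal_apply_ne _ hab]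
      exact hdiag _ _ (fun h => hab (Subtype.ext h))
  rw [sd, hsub, Matrix.det_diagonal]
  exact Finset.prod_coe_sort S (fun i => K i i)

lemma diag_dir {K : Matrix (Fin n) (Fin n) ℝ} (hK : K.PosDef)
    {ι : Type} [Fintype ι] (F : ι → Finset (Fin n)) (γ : ι → ℝ)
    (hfrac : ∀ i : Fin n, ∑ k ∈ Finset.univ.filter (fun k => i ∈ F k), γ k = 1)
    (hdiag : ∀ i j : Fin n, i ≠ j → K i j = 0) :
    (∏ k : ι, sd K (F k) ^ (γ k)) = K.det := by
  have hKd : ∀ i, 0 < K i i := diag_entry_pos hK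
  have hdet : K.det = ∏ i, K i i := by
    rw [sd_univ_eq (K := K), sd_diag hdiag]
  have hlpos : 0 < ∏ k : ι, sd K (F k) ^ (γ k) :=
    Finset.prod_pos (fun k _ => Real.rpow_pos_of_pos (sd_pos hK _) _)
  have hrpos : (0:ℝ) < K.det := hK.det_pos
  apply Real.log_injOn_pos (Set.mem_Ioi.mpr hlpos) (Set.mem_Ioi.mpr hrpos)
  have hlog1 : Real.log (∏ k : ι, sd K (F k) ^ (γ k))
      = ∑ k, γ k * ∑ i ∈ F k, Real.log (K i i) := by
    rw [Real.log_prod (fun k _ => (Real.rpow_pos_of_pos (sd_pos hK _) _).ne')]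
    apply Finset.sum_congr rfl
    intro k _
    rw [Real.log_rpow (sd_pos hK _), sd_diag hdiag,
      Real.log_prod (fun i _ => (hKd i).ne')]
  have hlog2 : Real.log K.det = ∑ i, Real.log (K i i) := by
    rw [hdet, Real.log_prod (fun i _ => (hKd i).ne')]
  rw [hlog1, hlog2, swap_frac F γ hfrac]

lemma offdiag_zero {m : ℕ} {K : Matrix (Fin (m+2)) (Fin (m+2)) ℝ} (hK : K.PosDef)
    {ι : Type} [Fintype ι] (F : ι → Finset (Fin (m+2))) (γ : ι → ℝ)
    (hpos : ∀ k, 0 < γ k)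
    (hfrac : ∀ i : Fin (m+2), ∑ k ∈ Finset.univ.filter (fun k => i ∈ F k), γ k = 1)
    (heq : (∏ k : ι, sd K (F k) ^ (γ k)) = K.det)
    {a b : Fin (m+2)} (hab : a ≠ b) {k0 : ι} (hbk : b ∈ F k0) (hak : a ∉ F k0) :
    K a b = 0 := by
  classical
  have h01 : (0 : Fin (m+2)) ≠ 1 := by
    intro h
    have := congrArg Fin.val h
    rw [Fin.val_zero, Fin.val_one] at this
    omega
  set τ : Equiv.Perm (Fin (m+2)) := Equiv.swap 0 a with hτ
  set j' : Fin (m+2) := τ b with hj'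
  have hτj' : τ j' = b := Equiv.swap_apply_self 0 a b
  have hj'0 : j' ≠ 0 := by
    intro h
    apply hab
    have : τ j' = τ 0 := by rw [h]
    rw [hτj', Equiv.swap_apply_left] at this
    exact this.symm
  set σ : Equiv.Perm (Fin (m+2)) := (Equiv.swap 1 j').trans τ with hσ
  have hσ0 : σ 0 = a := by
    rw [hσ]
    simp only [Equiv.trans_apply]
    rw [Equiv.swap_apply_of_ne_of_ne h01 (Ne.symm hj'0), hτ, Equiv.swap_apply_left]
  have hσ1 : σ 1 = b := by
    rw [hσ]
    simp only [Equiv.trans_apply]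
    rw [Equiv.swap_apply_left, hτj']
  set K' : Matrix (Fin (m+2)) (Fin (m+2)) ℝ := K.submatrix σ σ with hK'def
  have hK' : K'.PosDef := posdef_sub hK σ σ.injective
  set F' : ι → Finset (Fin (m+2)) := fun k => (F k).preimage σ σ.injective.injOn with hF'
  have hmemF' : ∀ (k) (x : Fin (m+2)), x ∈ F' k ↔ σ x ∈ F k := by
    intro k x
    rw [hF']
    exact Finset.mem_preimage
  have hsd : ∀ k, sd K' (F' k) = sd K (F k) := by
    intro k
    rw [sd, sd, ← Matrix.det_submatrix_equiv_self
      (Equiv.subtypeEquiv σ (fun x => hmemF' k x))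
      (K.submatrix (fun i : {i // i ∈ F k} => (i : Fin (m+2)))
        (fun i : {i // i ∈ F k} => (i : Fin (m+2))))]
    congr 1
  have hdet' : K'.det = K.det := Matrix.det_submatrix_equiv_self σ K
  have heq' : (∏ k : ι, sd K' (F' k) ^ (γ k)) = K'.det := by
    rw [hdet', ← heq]
    exact Finset.prod_congr rfl (fun k _ => by rw [hsd k])
  have hfrac' : ∀ x : Fin (m+2), ∑ k ∈ Finset.univ.filter (fun k => x ∈ F' k), γ k = 1 := by
    intro x
    have hfil : (Finset.univ.filter fun k => x ∈ F' k)
        = Finset.univ.filter (fun k => σ x ∈ F k) := by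
      apply Finset.filter_congr
      intro k _
      simp [hmemF' k x]
    rw [hfil]
    exact hfrac (σ x)
  have h1F' : (1 : Fin (m+2)) ∈ F' k0 := (hmemF' k0 1).mpr (by rw [hσ1]; exact hbk)
  have hkey := key hK' F' γ hpos hfrac' heq' k0 1 h1F'
  have hIio1 : Finset.Iio (1 : Fin (m+2)) = {0} := by
    ext x
    simp only [Finset.mem_Iio, Finset.mem_singleton]
    constructor
    · intro h
      have h2 : x.val < (1 : Fin (m+2)).val := h
      rw [Fin.val_one] at h2
      refine Fin.ext ?_
      rw [Fin.val_zero]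
      omega
    · rintro rfl
      exact Fin.lt_def.mpr (by rw [Fin.val_zero, Fin.val_one]; exact Nat.zero_lt_one)
  have h0notin : (0 : Fin (m+2)) ∉ F' k0 := by
    rw [hmemF' k0 0, hσ0]
    exact hak
  have hinter : F' k0 ∩ Finset.Iio 1 = ∅ := by
    rw [hIio1]
    rw [Finset.eq_empty_iff_forall_notMem]
    intro x hx
    rw [Finset.mem_inter, Finset.mem_singleton] at hx
    obtain ⟨hx1, rfl⟩ := hx
    exact h0notin hx1
  rw [hinter, hIio1] at hkey
  have h1n0 : (1 : Fin (m+2)) ∉ ({0} : Finset (Fin (m+2))) := by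
    rw [Finset.mem_singleton]
    exact Ne.symm h01
  obtain ⟨x, hx0, hxB⟩ := cv_eq_imp hK' (Finset.empty_subset _) h1n0 hkey
  have hx : x = 0 := funext fun j => hx0 j (Finset.notMem_empty j)
  have hfin := hxB 0 (Finset.mem_singleton_self 0)
  rw [hx, add_zero] at hfin
  rw [Matrix.mulVec_single] at hfin
  have : K' 0 1 = 0 := by simpa using hfin
  rw [hK'def] at this
  rw [Matrix.submatrix_apply, hσ0, hσ1] at this
  exact this

end S19

end

theorem stmt_19 (n : ℕ) (hn : 2 ≤ n)
    (K : Matrix (Fin n) (Fin n) ℝ) (hK : K.PosDef)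
    (ι : Type) [Fintype ι] (F : ι → Finset (Fin n)) (γ : ι → ℝ)
    (hproper : ∀ k, F k ≠ Finset.univ)
    (hpos : ∀ k, 0 < γ k)
    (hsep : ∀ i j : Fin n, i ≠ j → ¬ (∀ k, i ∈ F k ↔ j ∈ F k))
    (hfrac : ∀ i : Fin n, ∑ k ∈ Finset.univ.filter (fun k => i ∈ F k), γ k = 1) :
    (∏ k : ι, (K.submatrix (fun i : {i // i ∈ F k} => (i : Fin n))
        (fun i : {i // i ∈ F k} => (i : Fin n))).det ^ (γ k)) = K.det ↔
      ∀ i j : Fin n, i ≠ j → K i j = 0 := by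
  obtain ⟨m, rfl⟩ : ∃ m, n = m + 2 := ⟨n - 2, by omega⟩
  constructor
  · intro heq i j hij
    have heq' : (∏ k : ι, S19.sd K (F k) ^ (γ k)) = K.det := heq
    obtain ⟨k, hk⟩ := not_forall.mp (hsep i j hij)
    by_cases hik : i ∈ F k
    · have hjk : j ∉ F k := fun h => hk ⟨fun _ => h, fun _ => hik⟩
      have hz := S19.offdiag_zero hK F γ hpos hfrac heq'
        (Ne.symm hij) hik hjk
      rw [S19.symm_apply hK i j]
      exact hz
    · have hjk : j ∈ F k := by
        by_contra hj
        exact hk ⟨fun h => absurd h hik, fun h => absurd h hj⟩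
      exact S19.offdiag_zero hK F γ hpos hfrac heq' hij hjk hik
  · intro hdiag
    exact S19.diag_dir hK F γ hfrac hdiag
end
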